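/- arXiv:1909.00616 — 4 statements merged into one kernel-verified Lean document; each statement's English description precedes it below -/
import Mathlib

section
/- Let X be a real-valued integrable random variable with E[X] < 0, let X(n) be i.i.d. copies of X, S(n) = X(1)+...+X(n), and for x > 0 let τ_x = inf{n ≥ 1 : x + S(n) ≤ 0}. Then E[τ_x] < ∞. -/
open MeasureTheory ProbabilityTheory Filter Set
open scoped ENNReal NNReal

/-- Partial sums `S(n) = X(0) + ... + X(n-1)` of the increments. -/
noncomputable def partialSum {Ω : Type*} (X : ℕ → Ω → ℝ) (n : ℕ) (ω : Ω) : ℝ :=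
  ∑ i ∈ Finset.range n, X i ω

/-- The exit time `τ_x = inf {n ≥ 1 : x + S(n) ≤ 0}`, with value `⊤` if no such `n` exists. -/
noncomputable def exitTime {Ω : Type*} (X : ℕ → Ω → ℝ) (x : ℝ) (ω : Ω) : ℕ∞ :=
  sInf {n : ℕ∞ | ∃ m : ℕ, (m : ℕ∞) = n ∧ 1 ≤ m ∧ x + partialSum X m ω ≤ 0}

/-!
Truncating the increments below at a level `-c`, chosen by dominated convergence so that the
mean `m` stays negative, can only delay the exit. For increments `Y k ≥ -c` the walk stopped at
`min τ_x n` never drops below `-(x + c)`, because it is nonnegative before `τ_x` and the last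
step is `≥ -c`. The event `{k < τ_x}` depends only on `Y 0, …, Y (k - 1)`, so it is independent
of `Y k`, and taking expectations gives `E[min τ_x n] · (-m) ≤ x + c`. Hence
`E[τ_x] = ∑ₖ P(k < τ_x) ≤ (x + c) / (-m)`.
-/

open scoped Topology

section ExitTime

variable {Ω : Type*}

/-- The event `{k < τ_x}`. -/
def noExitSet (X : ℕ → Ω → ℝ) (x : ℝ) (k : ℕ) : Set Ω :=
  {ω | ∀ m : ℕ, 1 ≤ m → m ≤ k → 0 < x + partialSum X m ω}

lemma noExitSet_anti (X : ℕ → Ω → ℝ) (x : ℝ) : Antitone (noExitSet X x) :=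
  fun _ _ hkl _ hω m hm hmk => hω m hm (hmk.trans hkl)

lemma noExitSet_mono {X Y : ℕ → Ω → ℝ} (hXY : ∀ n ω, X n ω ≤ Y n ω) (x : ℝ) (k : ℕ) :
    noExitSet X x k ⊆ noExitSet Y x k := fun ω hω m hm hmk =>
  (hω m hm hmk).trans_le <| (add_le_add_iff_left x).2 <| Finset.sum_le_sum fun i _ => hXY i ω

lemma nonneg_of_mem_noExitSet {X : ℕ → Ω → ℝ} {x : ℝ} (hx : 0 ≤ x) {k : ℕ} {ω : Ω}
    (hω : ω ∈ noExitSet X x k) : 0 ≤ x + partialSum X k ω := by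
  cases k with
  | zero => simpa [partialSum] using hx
  | succ k => exact (hω (k + 1) k.succ_pos le_rfl).le

lemma measurableSet_noExitSet {m : MeasurableSpace Ω} {X : ℕ → Ω → ℝ} (x : ℝ) {k : ℕ}
    (hX : ∀ i < k, Measurable (X i)) : MeasurableSet (noExitSet X x k) := by
  have : noExitSet X x k = ⋂ j ∈ Set.Icc 1 k, {ω | 0 < x + partialSum X j ω} := by
    ext ω
    simp [noExitSet]
  rw [this]
  refine MeasurableSet.biInter (Set.to_countable _) fun j hj => measurableSet_lt measurable_const ?_
  exact measurable_const.add <| Finset.measurable_sum _ fun i hi =>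
    hX i ((Finset.mem_range.1 hi).trans_le hj.2)

lemma lt_exitTime_iff {X : ℕ → Ω → ℝ} {x : ℝ} {ω : Ω} {k : ℕ} :
    (k : ℕ∞) < exitTime X x ω ↔ ω ∈ noExitSet X x k := by
  rw [exitTime, ← ENat.add_one_le_iff (ENat.natCast_ne_top k), le_sInf_iff]
  constructor
  · intro h m hm hmk
    by_contra! hle
    have := h m ⟨m, rfl, hm, hle⟩
    norm_cast at this
    omega
  · rintro h _ ⟨m, rfl, hm, hle⟩
    by_contra! hlt
    norm_cast at hlt
    exact (h m hm (by omega)).not_ge hle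

lemma sum_indicator_noExitSet_of_mem {Y : ℕ → Ω → ℝ} {x : ℝ} {k : ℕ} {ω : Ω}
    (hω : ω ∈ noExitSet Y x k) :
    ∑ i ∈ Finset.range k, (noExitSet Y x i).indicator (Y i) ω = partialSum Y k ω :=
  Finset.sum_congr rfl fun _ hi =>
    Set.indicator_of_mem (noExitSet_anti Y x (Finset.mem_range.1 hi).le hω) _

lemma neg_le_sum_indicator_noExitSet {Y : ℕ → Ω → ℝ} {x c : ℝ} (hx : 0 ≤ x) (hc : 0 ≤ c)
    {ω : Ω} (hY : ∀ n, -c ≤ Y n ω) (n : ℕ) :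
    -(x + c) ≤ ∑ k ∈ Finset.range n, (noExitSet Y x k).indicator (Y k) ω := by
  induction n with
  | zero =>
    simp only [Finset.range_zero, Finset.sum_empty]
    linarith
  | succ n ih =>
    rw [Finset.sum_range_succ]
    by_cases hω : ω ∈ noExitSet Y x n
    · rw [sum_indicator_noExitSet_of_mem hω, Set.indicator_of_mem hω]
      linarith [nonneg_of_mem_noExitSet hx hω, hY n]
    · rw [Set.indicator_of_notMem hω, add_zero]
      exact ih

end ExitTime

lemma ENat.toENNReal_eq_tsum_ite_lt (a : ℕ∞) :
    (a : ℝ≥0∞) = ∑' k : ℕ, if (k : ℕ∞) < a then 1 else 0 := by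
  induction a using ENat.recTopCoe with
  | top => simp
  | coe n =>
    rw [tsum_eq_sum (s := Finset.range n) fun k hk => if_neg (by simpa using hk),
      Finset.sum_ite_of_true fun k hk => by simpa using hk]
    simp

lemma lintegral_exitTime_eq_tsum {Ω : Type*} [MeasurableSpace Ω] {μ : Measure Ω}
    {X : ℕ → Ω → ℝ} (hX : ∀ n, Measurable (X n)) (x : ℝ) :
    ∫⁻ ω, (exitTime X x ω : ℝ≥0∞) ∂μ = ∑' k, μ (noExitSet X x k) := by
  have hG k : MeasurableSet (noExitSet X x k) := measurableSet_noExitSet x fun i _ => hX i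
  calc ∫⁻ ω, (exitTime X x ω : ℝ≥0∞) ∂μ
      = ∫⁻ ω, ∑' k, (noExitSet X x k).indicator 1 ω ∂μ := by
        refine lintegral_congr fun ω => ?_
        rw [ENat.toENNReal_eq_tsum_ite_lt]
        refine tsum_congr fun k => ?_
        by_cases h : ω ∈ noExitSet X x k
        · simp [h, lt_exitTime_iff.2 h]
        · simp [h, mt lt_exitTime_iff.1 h]
    _ = ∑' k, μ (noExitSet X x k) := by
        rw [lintegral_tsum fun k => (measurable_one.indicator (hG k)).aemeasurable]
        exact tsum_congr fun k => lintegral_indicator_one (hG k)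

section RandomWalk

variable {Ω : Type*} [MeasurableSpace Ω] {μ : Measure Ω} {Y : ℕ → Ω → ℝ}

lemma integral_indicator_noExitSet (hY : ∀ n, Measurable (Y n)) (hindep : iIndepFun Y μ)
    (x : ℝ) (k : ℕ) :
    ∫ ω, (noExitSet Y x k).indicator (Y k) ω ∂μ = μ.real (noExitSet Y x k) * ∫ ω, Y k ω ∂μ := by
  have hindep_past : Indep (⨆ i ∈ Set.Iio k, MeasurableSpace.comap (Y i) inferInstance)
      (MeasurableSpace.comap (Y k) inferInstance) μ := by
    have := indep_iSup_of_disjoint (fun i => (hY i).comap_le) hindep.iIndep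
      (S := Set.Iio k) (T := {k}) (by simp)
    rwa [iSup_singleton] at this
  have hG_past : MeasurableSet[⨆ i ∈ Set.Iio k, MeasurableSpace.comap (Y i) inferInstance]
      (noExitSet Y x k) :=
    measurableSet_noExitSet x fun i hi =>
      (comap_measurable (Y i)).mono (le_iSup₂ (f := fun j (_ : j ∈ Set.Iio k) =>
        MeasurableSpace.comap (Y j) inferInstance) i hi) le_rfl
  have hG : MeasurableSet (noExitSet Y x k) := measurableSet_noExitSet x fun i _ => hY i
  have hmul :
      (noExitSet Y x k).indicator (Y k) = (noExitSet Y x k).indicator (fun _ => 1) * Y k := by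
    ext ω
    by_cases hω : ω ∈ noExitSet Y x k <;> simp [hω]
  rw [hmul, (hindep_past.indicator_indepFun (1 : ℝ) hG_past).integral_mul_eq_mul_integral
    (measurable_const.indicator hG).aestronglyMeasurable (hY k).aestronglyMeasurable,
    integral_indicator_const _ hG, smul_eq_mul, mul_one]

lemma sum_measureReal_noExitSet_mul_le (hY : ∀ n, Measurable (Y n)) (hindep : iIndepFun Y μ)
    (hint : ∀ n, Integrable (Y n) μ) {m : ℝ} (hmean : ∀ n, ∫ ω, Y n ω ∂μ = m) {x c : ℝ}
    (hx : 0 ≤ x) (hc : 0 ≤ c) (hYc : ∀ n ω, -c ≤ Y n ω) (n : ℕ) :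
    (∑ k ∈ Finset.range n, μ.real (noExitSet Y x k)) * -m ≤ x + c := by
  have := hindep.isProbabilityMeasure
  have hint_stopped k : Integrable ((noExitSet Y x k).indicator (Y k)) μ :=
    (hint k).indicator (measurableSet_noExitSet x fun i _ => hY i)
  have h := integral_mono (integrable_const (-(x + c)))
    (integrable_finsetSum (Finset.range n) fun k _ => hint_stopped k)
    fun ω => neg_le_sum_indicator_noExitSet hx hc (fun k => hYc k ω) n
  rw [integral_const, integral_finsetSum _ fun k _ => hint_stopped k] at h
  simp only [integral_indicator_noExitSet hY hindep, hmean] at h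
  rw [probReal_univ, one_smul, ← Finset.sum_mul] at h
  linarith [mul_neg (∑ k ∈ Finset.range n, μ.real (noExitSet Y x k)) m]

lemma tsum_measure_noExitSet_le (hY : ∀ n, Measurable (Y n)) (hindep : iIndepFun Y μ)
    (hint : ∀ n, Integrable (Y n) μ) {m : ℝ} (hmean : ∀ n, ∫ ω, Y n ω ∂μ = m) (hm : m < 0)
    {x c : ℝ} (hx : 0 ≤ x) (hc : 0 ≤ c) (hYc : ∀ n ω, -c ≤ Y n ω) :
    ∑' k, μ (noExitSet Y x k) ≤ ENNReal.ofReal ((x + c) / -m) := by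
  have := hindep.isProbabilityMeasure
  refine ENNReal.summable.tsum_le_of_sum_range_le fun n => ?_
  calc ∑ k ∈ Finset.range n, μ (noExitSet Y x k)
      = ENNReal.ofReal (∑ k ∈ Finset.range n, μ.real (noExitSet Y x k)) := by
        rw [ENNReal.ofReal_sum_of_nonneg fun k _ => measureReal_nonneg]
        exact Finset.sum_congr rfl fun k _ => (ofReal_measureReal (measure_ne_top μ _)).symm
    _ ≤ ENNReal.ofReal ((x + c) / -m) :=
        ENNReal.ofReal_le_ofReal <| (le_div_iff₀ (neg_pos.2 hm)).2 <|
          sum_measureReal_noExitSet_mul_le hY hindep hint hmean hx hc hYc n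

end RandomWalk

section Truncation

variable {Ω : Type*} [MeasurableSpace Ω] {μ : Measure Ω} {f : Ω → ℝ}

lemma abs_max_neg_le_abs (t : ℝ) {c : ℝ} (hc : 0 ≤ c) : |max t (-c)| ≤ |t| :=
  abs_le.2 ⟨(neg_abs_le t).trans (le_max_left _ _),
    max_le (le_abs_self t) ((neg_nonpos.2 hc).trans (abs_nonneg t))⟩

lemma MeasureTheory.Integrable.max_neg_const (hf : Integrable f μ) {c : ℝ} (hc : 0 ≤ c) :
    Integrable (fun ω => max (f ω) (-c)) μ :=
  hf.mono (hf.aemeasurable.sup_const _).aestronglyMeasurable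
    (ae_of_all _ fun ω => abs_max_neg_le_abs (f ω) hc)

lemma tendsto_integral_max_neg_natCast (hf : Integrable f μ) :
    Tendsto (fun n : ℕ => ∫ ω, max (f ω) (-n) ∂μ) atTop (𝓝 (∫ ω, f ω ∂μ)) := by
  refine tendsto_integral_of_dominated_convergence (fun ω => |f ω|)
    (fun n => (hf.max_neg_const n.cast_nonneg).aestronglyMeasurable) hf.abs
    (fun n => ae_of_all _ fun ω => abs_max_neg_le_abs (f ω) n.cast_nonneg)
    (ae_of_all _ fun ω => ?_)
  refine tendsto_const_nhds.congr' ?_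
  filter_upwards [tendsto_natCast_atTop_atTop.eventually_ge_atTop (-f ω)] with n hn
  exact (max_eq_left (neg_le.1 hn)).symm

lemma exists_integral_max_neg_lt_zero (hf : Integrable f μ) (hneg : ∫ ω, f ω ∂μ < 0) :
    ∃ c, 0 ≤ c ∧ ∫ ω, max (f ω) (-c) ∂μ < 0 := by
  obtain ⟨n, hn⟩ := ((tendsto_integral_max_neg_natCast hf).eventually_lt_const hneg).exists
  exact ⟨n, n.cast_nonneg, hn⟩

end Truncation

theorem expectation_exitTime_lt_top_general
    {Ω : Type*} [MeasureSpace Ω]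
    (X : ℕ → Ω → ℝ) (X0 : Ω → ℝ)
    (hmeas : ∀ n, Measurable (X n))
    (hindep : iIndepFun X ℙ)
    (hident : ∀ n, IdentDistrib (X n) X0 ℙ ℙ)
    (hint : Integrable X0 ℙ)
    (hdrift : ∫ ω, X0 ω ∂ℙ < 0)
    (x : ℝ) (hx : 0 < x) :
    ∫⁻ ω, (exitTime X x ω : ℝ≥0∞) ∂ℙ < ⊤ := by
  obtain ⟨c, hc, hmean⟩ := exists_integral_max_neg_lt_zero hint hdrift
  have htrunc : Measurable fun t : ℝ => max t (-c) := measurable_id.max measurable_const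
  let Y : ℕ → Ω → ℝ := fun n ω => max (X n ω) (-c)
  have hYident n : IdentDistrib (Y n) (fun ω => max (X0 ω) (-c)) ℙ ℙ := (hident n).comp htrunc
  calc ∫⁻ ω, (exitTime X x ω : ℝ≥0∞) ∂ℙ
      = ∑' k, ℙ (noExitSet X x k) := lintegral_exitTime_eq_tsum hmeas x
    _ ≤ ∑' k, ℙ (noExitSet Y x k) :=
        ENNReal.tsum_le_tsum fun k =>
          measure_mono <| noExitSet_mono (fun _ _ => le_max_left _ _) x k
    _ ≤ ENNReal.ofReal ((x + c) / -∫ ω, max (X0 ω) (-c) ∂ℙ) :=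
        tsum_measure_noExitSet_le (fun n => htrunc.comp (hmeas n))
          (hindep.comp _ fun _ => htrunc)
          (fun n => (hYident n).integrable_iff.2 (hint.max_neg_const hc))
          (fun n => (hYident n).integral_eq) hmean hx.le hc fun _ _ => le_max_right _ _
    _ < ⊤ := ENNReal.ofReal_lt_top

/-- if `X` is integrable with `E[X] < 0`, then `E[τ_x] < ∞` for every `x > 0`. -/
theorem expectation_exitTime_lt_top
    {Ω : Type*} [MeasureSpace Ω] [IsProbabilityMeasure (ℙ : Measure Ω)]
    (X : ℕ → Ω → ℝ) (X0 : Ω → ℝ)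
    (hmeas : ∀ n, Measurable (X n))
    (hindep : iIndepFun X ℙ)
    (hident : ∀ n, IdentDistrib (X n) X0 ℙ ℙ)
    (hint : Integrable X0 ℙ)
    (hdrift : ∫ ω, X0 ω ∂ℙ < 0)
    (x : ℝ) (hx : 0 < x) :
    ∫⁻ ω, (exitTime X x ω : ℝ≥0∞) ∂ℙ < ⊤ :=
  expectation_exitTime_lt_top_general X X0 hmeas hindep hident hint hdrift x hx
end

section
/- Let X be a centered real random variable with E[X²] < ∞, X(n) i.i.d. copies, S(n) their partial sums, and τ_x = inf{n ≥ 1 : x + S(n) ≤ 0}. Define g₁(x) = E[(x + S(τ_x)); τ_x < ∞] and h₁(x) = x − g₁(x). Then h₁ is harmonic for the random walk killed when exiting (0,∞), i.e., h₁(x) = E[h₁(x + S(1)); τ_x > 1] for all x > 0. -/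
open MeasureTheory ProbabilityTheory Filter Set
open scoped ENNReal NNReal

/-- `g₁(x) = E[(x + S(τ_x)); τ_x < ∞]`. -/
noncomputable def gOne {Ω : Type*} [MeasureSpace Ω] (X : ℕ → Ω → ℝ) (x : ℝ) : ℝ :=
  ∫ ω, Set.indicator {ω | exitTime X x ω ≠ ⊤}
    (fun ω => x + partialSum X (exitTime X x ω).toNat ω) ω ∂ℙ

/-- `h₁(x) = x − g₁(x)`. -/
noncomputable def hOne {Ω : Type*} [MeasureSpace Ω] (X : ℕ → Ω → ℝ) (x : ℝ) : ℝ :=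
  x - gOne X x

/-!
First-step analysis. If `x + X 0 ≤ 0` the walk exits at time `1`, at position `x + X 0`;
otherwise it restarts from `x + X 0` driven by the shifted sequence `(X (n + 1))ₙ`, which is
independent of `X 0` and has the same law as `X`. Conditioning on `X 0` (Fubini for the
independent pair) gives `g₁(x) = E[x + X 0; x + X 0 ≤ 0] + E[g₁(x + X 0); x + X 0 > 0]`, and
subtracting this from `x = E[x + X 0]` leaves `h₁(x) = E[h₁(x + X 0); x + X 0 > 0]`.
-/

section ExitTime

variable {Ω : Type*} {X : ℕ → Ω → ℝ} {x : ℝ} {ω : Ω}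

lemma partialSum_one : partialSum X 1 ω = X 0 ω := by
  simp [partialSum]

lemma partialSum_succ' (m : ℕ) :
    partialSum X (m + 1) ω = X 0 ω + partialSum (fun n => X (n + 1)) m ω := by
  rw [partialSum, Finset.sum_range_succ', add_comm]
  rfl

lemma exitTime_le {m : ℕ} (hm : 1 ≤ m) (h : x + partialSum X m ω ≤ 0) :
    exitTime X x ω ≤ m :=
  sInf_le ⟨m, rfl, hm, h⟩

lemma le_exitTime {n : ℕ∞} (h : ∀ m : ℕ, 1 ≤ m → x + partialSum X m ω ≤ 0 → n ≤ m) :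
    n ≤ exitTime X x ω :=
  le_sInf fun _ ⟨m, hm, h1, h2⟩ => hm ▸ h m h1 h2

lemma one_le_exitTime : 1 ≤ exitTime X x ω :=
  le_exitTime fun _ hm _ => mod_cast hm

lemma exitTime_spec {m : ℕ} (h : exitTime X x ω = m) :
    1 ≤ m ∧ x + partialSum X m ω ≤ 0 := by
  unfold exitTime at h
  set s := {n : ℕ∞ | ∃ m : ℕ, (m : ℕ∞) = n ∧ 1 ≤ m ∧ x + partialSum X m ω ≤ 0}
  have hs : s.Nonempty := by
    by_contra hs
    rw [Set.not_nonempty_iff_eq_empty] at hs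
    rw [hs, sInf_empty] at h
    exact ENat.top_ne_natCast m h
  obtain ⟨m', hm', h1, h2⟩ := csInf_mem hs
  obtain rfl : m' = m := by exact_mod_cast hm'.trans h
  exact ⟨h1, h2⟩

lemma exitTime_eq_coe_iff {m : ℕ} : exitTime X x ω = m ↔
    (1 ≤ m ∧ x + partialSum X m ω ≤ 0) ∧ ∀ k < m, ¬ (1 ≤ k ∧ x + partialSum X k ω ≤ 0) := by
  refine ⟨fun h => ⟨exitTime_spec h, fun k hk ⟨h1, h2⟩ => ?_⟩, fun ⟨⟨h1, h2⟩, hmin⟩ => ?_⟩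
  · have := h ▸ exitTime_le h1 h2
    exact absurd hk (not_lt.2 (mod_cast this))
  · refine le_antisymm (exitTime_le h1 h2) (le_exitTime fun k hk1 hk2 => ?_)
    exact_mod_cast not_lt.1 fun hk => hmin k hk ⟨hk1, hk2⟩

lemma exitTime_eq_one (h : x + X 0 ω ≤ 0) : exitTime X x ω = 1 :=
  le_antisymm (exitTime_le le_rfl (by rwa [partialSum_one])) one_le_exitTime

lemma exitTime_eq_exitTime_tail_add_one (h : 0 < x + X 0 ω) :
    exitTime X x ω = exitTime (fun n => X (n + 1)) (x + X 0 ω) ω + 1 := by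
  refine le_antisymm ?_ (le_exitTime fun m hm hle => ?_)
  · by_cases htop : exitTime (fun n => X (n + 1)) (x + X 0 ω) ω = ⊤
    · simp [htop]
    obtain ⟨k, hτ⟩ := ENat.ne_top_iff_exists.1 htop
    obtain ⟨hk, hle⟩ := exitTime_spec hτ.symm
    rw [← hτ, ← Nat.cast_succ]
    exact exitTime_le (by omega) (by rwa [partialSum_succ', ← add_assoc])
  · obtain ⟨k, rfl⟩ : ∃ k, m = k + 1 := ⟨m - 1, by omega⟩
    have hk : 1 ≤ k := by
      by_contra hk
      obtain rfl : k = 0 := by omega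
      rw [partialSum_one] at hle
      linarith
    rw [partialSum_succ', ← add_assoc] at hle
    push_cast
    gcongr
    exact exitTime_le hk hle

lemma one_lt_exitTime_iff : 1 < exitTime X x ω ↔ 0 < x + X 0 ω := by
  refine ⟨fun h => not_le.1 fun h' => ?_, fun h => ?_⟩
  · rw [exitTime_eq_one h'] at h
    exact lt_irrefl _ h
  · rw [exitTime_eq_exitTime_tail_add_one h]
    calc (1 : ℕ∞) < 1 + 1 := by norm_num
      _ ≤ _ := by gcongr; exact one_le_exitTime

end ExitTime

section ExitPosition

variable {Ω : Type*} (X : ℕ → Ω → ℝ) (x : ℝ)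

/-- `x + S(τ_x)` on `{τ_x < ∞}` and `0` elsewhere: the integrand of `gOne X x`. -/
noncomputable def exitPosition (ω : Ω) : ℝ :=
  Set.indicator {ω | exitTime X x ω ≠ ⊤} (fun ω => x + partialSum X (exitTime X x ω).toNat ω) ω

lemma exitPosition_eq_indicator_add_indicator (ω : Ω) : exitPosition X x ω =
    (Iic 0).indicator id (x + X 0 ω) +
      (Ioi 0).indicator (fun y => exitPosition (fun n => X (n + 1)) y ω) (x + X 0 ω) := by
  by_cases h : x + X 0 ω ≤ 0
  · simp [exitPosition, h, exitTime_eq_one h, partialSum_one]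
  simp only [Set.indicator_of_notMem (show x + X 0 ω ∉ Iic 0 from h),
    Set.indicator_of_mem (show x + X 0 ω ∈ Ioi 0 from not_le.1 h), zero_add, exitPosition,
    Set.indicator_apply, Set.mem_ofPred_eq, exitTime_eq_exitTime_tail_add_one (not_le.1 h)]
  by_cases htop : exitTime (fun n => X (n + 1)) (x + X 0 ω) ω = ⊤
  · simp [htop]
  · obtain ⟨k, hk⟩ := ENat.ne_top_iff_exists.1 htop
    simp [← hk, ← Nat.cast_succ, -Nat.cast_add, partialSum_succ', add_assoc]

variable [MeasurableSpace Ω] {X} (hX : ∀ n, Measurable (X n))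
include hX

lemma measurable_partialSum (n : ℕ) : Measurable (partialSum X n) :=
  Finset.measurable_sum _ fun i _ => hX i

lemma measurable_exitTime {c : Ω → ℝ} (hc : Measurable c) :
    Measurable fun ω => exitTime X (c ω) ω := by
  refine ENat.measurable_iff.2 fun m => ?_
  simp only [Set.preimage, Set.mem_singleton_iff, exitTime_eq_coe_iff]
  have hP : ∀ k, MeasurableSet {ω | 1 ≤ k ∧ c ω + partialSum X k ω ≤ 0} := fun k =>
    (MeasurableSet.const _).inter
      (measurableSet_le (hc.add (measurable_partialSum hX k)) measurable_const)
  refine measurableSet_setOfPred.2 ((measurableSet_setOfPred.1 (hP m)).and ?_)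
  exact Measurable.forall fun k => Measurable.forall fun _ => (measurableSet_setOfPred.1 (hP k)).not

lemma measurable_exitPosition {c : Ω → ℝ} (hc : Measurable c) :
    Measurable fun ω => exitPosition X (c ω) ω := by
  have hτ := measurable_exitTime hX hc
  change Measurable ({ω | exitTime X (c ω) ω ≠ ⊤}.indicator
    fun ω => c ω + partialSum X (exitTime X (c ω) ω).toNat ω)
  refine Measurable.indicator ?_ (hτ (measurableSet_singleton ⊤).compl)
  have hS : Measurable fun p : Ω × ℕ => c p.1 + partialSum X p.2 p.1 :=
    measurable_from_prod_countable_left fun n => hc.add (measurable_partialSum hX n)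
  exact hS.comp (measurable_id.prodMk ((Measurable.of_discrete (f := ENat.toNat)).comp hτ))

end ExitPosition

lemma MeasureTheory.Integrable.indicator_id_comp {Ω : Type*} [MeasurableSpace Ω] {μ : Measure Ω}
    {Y : Ω → ℝ} (hY : Integrable Y μ) (hm : Measurable Y) {s : Set ℝ} (hs : MeasurableSet s) :
    Integrable (fun ω => s.indicator id (Y ω)) μ := by
  refine (hY.indicator (hs.preimage hm)).congr (ae_of_all _ fun ω => ?_)
  exact Set.indicator_comp_right (g := id) Y

section Law

variable {Ω ι β : Type*} [MeasurableSpace Ω] [MeasurableSpace β] {μ : Measure Ω}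

lemma map_fun_eq_of_iIndepFun_of_identDistrib {X Y : ι → Ω → β}
    (hX : ∀ i, Measurable (X i)) (hY : ∀ i, Measurable (Y i))
    (hXi : iIndepFun X μ) (hYi : iIndepFun Y μ) (hXY : ∀ i, IdentDistrib (X i) (Y i) μ μ) :
    μ.map (fun ω i => X i ω) = μ.map (fun ω i => Y i ω) := by
  rw [hXi.map_fun_eq_infinitePi_map hX, hYi.map_fun_eq_infinitePi_map hY]
  simp_rw [fun i => (hXY i).map_eq]

lemma ProbabilityTheory.iIndepFun.indepFun_head_tail {X : ℕ → Ω → β} (hXi : iIndepFun X μ)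
    (hX : ∀ n, Measurable (X n)) :
    IndepFun (X 0) (fun ω n => X (n + 1) ω) μ := by
  have h := indep_iSup_of_disjoint (fun n => (hX n).comap_le) hXi.iIndep
    (disjoint_compl_right (a := ({0} : Set ℕ)))
  refine indep_of_indep_of_le_left (indep_of_indep_of_le_right h ?_) ?_
  · refine Measurable.comap_le (@measurable_pi_lambda _ _ _
      (⨆ n ∈ ({0}ᶜ : Set ℕ), MeasurableSpace.comap (X n) inferInstance) _ _ fun n => ?_)
    exact Measurable.of_comap_le <|
      le_biSup (fun n => MeasurableSpace.comap (X n) inferInstance) (Nat.succ_ne_zero n)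
  · exact le_biSup (fun n => MeasurableSpace.comap (X n) inferInstance) (Set.mem_singleton 0)

end Law

namespace ProbabilityTheory.IndepFun

variable {Ω α β E : Type*} [MeasurableSpace Ω] [MeasurableSpace α] [MeasurableSpace β]
  [NormedAddCommGroup E] {μ : Measure Ω} [IsFiniteMeasure μ]
  {Y : Ω → α} {T : Ω → β} {F : α → β → E}
  (hYT : IndepFun Y T μ) (hY : Measurable Y) (hT : Measurable T)
  (hF : StronglyMeasurable (Function.uncurry F)) (hint : Integrable (fun ω => F (Y ω) (T ω)) μ)
include hYT hY hT hF hint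

lemma integrable_uncurry_prod_map : Integrable (Function.uncurry F) ((μ.map Y).prod (μ.map T)) := by
  rw [← hYT.map_prod_eq_prod_map_map hY.aemeasurable hT.aemeasurable]
  exact (integrable_map_measure hF.aestronglyMeasurable (hY.prodMk hT).aemeasurable).2 hint

lemma integrable_integral_comp [NormedSpace ℝ E] :
    Integrable (fun ω => ∫ v, F (Y ω) v ∂(μ.map T)) μ :=
  (integrable_map_measure hF.integral_prod_right'.aestronglyMeasurable hY.aemeasurable).1
    (hYT.integrable_uncurry_prod_map hY hT hF hint).integral_prod_left

lemma integral_comp_eq_integral_integral [NormedSpace ℝ E] :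
    ∫ ω, F (Y ω) (T ω) ∂μ = ∫ ω, ∫ v, F (Y ω) v ∂(μ.map T) ∂μ :=
  calc ∫ ω, F (Y ω) (T ω) ∂μ = ∫ p, Function.uncurry F p ∂(μ.map fun ω => (Y ω, T ω)) :=
        (integral_map (hY.prodMk hT).aemeasurable hF.aestronglyMeasurable).symm
    _ = ∫ y, ∫ v, F y v ∂(μ.map T) ∂(μ.map Y) := by
        rw [hYT.map_prod_eq_prod_map_map hY.aemeasurable hT.aemeasurable,
          integral_prod _ (hYT.integrable_uncurry_prod_map hY hT hF hint)]
        rfl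
    _ = _ := integral_map hY.aemeasurable hF.integral_prod_right'.aestronglyMeasurable

end ProbabilityTheory.IndepFun

section FirstStep

variable {Ω : Type*} [MeasureSpace Ω] {X : ℕ → Ω → ℝ} {X0 : Ω → ℝ}
  (hX : ∀ n, Measurable (X n)) (hXi : iIndepFun X ℙ) (hident : ∀ n, IdentDistrib (X n) X0 ℙ ℙ)

include hX in
lemma gOne_eq_integral_map (y : ℝ) :
    gOne X y = ∫ u, exitPosition (fun n (u : ℕ → ℝ) => u n) y u
      ∂((ℙ : Measure Ω).map fun ω n => X n ω) := by
  rw [integral_map (measurable_pi_lambda _ hX).aemeasurable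
    (measurable_exitPosition measurable_pi_apply measurable_const).aestronglyMeasurable]
  rfl

include hX hXi hident

lemma gOne_tail : gOne (fun n => X (n + 1)) = gOne X := by
  funext y
  rw [gOne_eq_integral_map (fun n => hX (n + 1)), gOne_eq_integral_map hX,
    map_fun_eq_of_iIndepFun_of_identDistrib (fun n => hX (n + 1)) hX
      (hXi.precomp (add_left_injective 1)) hXi fun n => (hident (n + 1)).trans (hident n).symm]

lemma integrable_and_integral_indicator_exitPosition_tail (x : ℝ)
    (hint : Integrable (fun ω =>
      (Ioi 0).indicator (fun y => exitPosition (fun n => X (n + 1)) y ω) (x + X 0 ω)) ℙ) :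
    Integrable (fun ω => (Ioi 0).indicator (gOne X) (x + X 0 ω)) ℙ ∧
      ∫ ω, (Ioi 0).indicator (fun y => exitPosition (fun n => X (n + 1)) y ω) (x + X 0 ω) =
        ∫ ω, (Ioi 0).indicator (gOne X) (x + X 0 ω) := by
  have := hXi.isProbabilityMeasure
  set F : ℝ → (ℕ → ℝ) → ℝ := fun y u =>
    (Ioi 0).indicator (fun y => exitPosition (fun n (u : ℕ → ℝ) => u n) y u) y
  have hF : StronglyMeasurable (Function.uncurry F) := by
    refine (Measurable.ite (measurableSet_Ioi.preimage measurable_fst) ?_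
      measurable_const).stronglyMeasurable
    exact measurable_exitPosition (X := fun n (p : ℝ × (ℕ → ℝ)) => p.2 n)
      (fun n => (measurable_pi_apply n).comp measurable_snd) measurable_fst
  have hinner (y : ℝ) :
      ∫ u, F y u ∂((ℙ : Measure Ω).map fun ω n => X (n + 1) ω) = (Ioi 0).indicator (gOne X) y := by
    by_cases hy : 0 < y
    · simp [F, hy, ← gOne_tail hX hXi hident, gOne_eq_integral_map (fun n => hX (n + 1))]
    · simp [F, hy]
  have hYT : IndepFun (fun ω => x + X 0 ω) (fun ω n => X (n + 1) ω) ℙ :=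
    (hXi.indepFun_head_tail hX).comp (measurable_const_add x) measurable_id
  have hY : Measurable fun ω => x + X 0 ω := (hX 0).const_add x
  have hT : Measurable fun ω n => X (n + 1) ω := measurable_pi_lambda _ fun n => hX (n + 1)
  refine ⟨?_, ?_⟩
  · simpa only [hinner] using hYT.integrable_integral_comp hY hT hF hint
  · exact (hYT.integral_comp_eq_integral_integral hY hT hF hint).trans (by simp only [hinner])

lemma gOne_eq_first_step {x : ℝ} (hY : Integrable (fun ω => x + X 0 ω) ℙ)
    (hint : Integrable (exitPosition X x) ℙ) :
    Integrable (fun ω => (Ioi 0).indicator (gOne X) (x + X 0 ω)) ℙ ∧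
      gOne X x = (∫ ω, (Iic 0).indicator id (x + X 0 ω)) +
        ∫ ω, (Ioi 0).indicator (gOne X) (x + X 0 ω) := by
  have hlow := hY.indicator_id_comp ((hX 0).const_add x) (measurableSet_Iic (a := 0))
  have hhigh : Integrable (fun ω =>
      (Ioi 0).indicator (fun y => exitPosition (fun n => X (n + 1)) y ω) (x + X 0 ω)) ℙ := by
    refine (hint.sub hlow).congr (ae_of_all _ fun ω => ?_)
    rw [Pi.sub_apply, exitPosition_eq_indicator_add_indicator]
    ring
  obtain ⟨hg, heq⟩ := integrable_and_integral_indicator_exitPosition_tail hX hXi hident x hhigh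
  refine ⟨hg, ?_⟩
  rw [← heq, ← integral_add hlow hhigh]
  exact integral_congr_ae (ae_of_all _ (exitPosition_eq_indicator_add_indicator X x))

end FirstStep

/-- `h₁` is harmonic for the random walk killed when exiting `(0,∞)`:
`h₁(x) = E[h₁(x + S(1)); τ_x > 1]` for all `x > 0`. -/
theorem hOne_harmonic
    {Ω : Type*} [MeasureSpace Ω] [IsProbabilityMeasure (ℙ : Measure Ω)]
    (X : ℕ → Ω → ℝ) (X0 : Ω → ℝ)
    (hmeas : ∀ n, Measurable (X n))
    (hindep : iIndepFun X ℙ)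
    (hident : ∀ n, IdentDistrib (X n) X0 ℙ ℙ)
    (hsq : Integrable (fun ω => X0 ω ^ 2) ℙ)
    (hcent : ∫ ω, X0 ω ∂ℙ = 0)
    (hg1 : ∀ x : ℝ, 0 < x → Integrable (Set.indicator {ω | exitTime X x ω ≠ ⊤}
      (fun ω => x + partialSum X (exitTime X x ω).toNat ω)) ℙ)
    (x : ℝ) (hx : 0 < x) :
    hOne X x =
      ∫ ω, Set.indicator {ω | 1 < exitTime X x ω}
        (fun ω => hOne X (x + partialSum X 1 ω)) ω ∂ℙ := by
  have hX0 : Integrable (X 0) ℙ := (hident 0).integrable_iff.2 <|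
    ((memLp_two_iff_integrable_sq (hident 0).aemeasurable_snd.aestronglyMeasurable).2
      hsq).integrable one_le_two
  have hY : Integrable (fun ω => x + X 0 ω) ℙ := (integrable_const x).add hX0
  have hmean : ∫ ω, x + X 0 ω ∂ℙ = x := by
    simp [integral_add (integrable_const x) hX0, (hident 0).integral_eq, hcent]
  have hYm : Measurable (fun ω => x + X 0 ω) := (hmeas 0).const_add x
  have hlow := hY.indicator_id_comp hYm (measurableSet_Iic (a := 0))
  have hhigh := hY.indicator_id_comp hYm (measurableSet_Ioi (a := 0))
  obtain ⟨hg, hgOne⟩ := gOne_eq_first_step hmeas hindep hident hY (hg1 x hx)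
  calc hOne X x = (∫ ω, (Iic 0).indicator id (x + X 0 ω)) +
        (∫ ω, (Ioi 0).indicator id (x + X 0 ω)) - gOne X x := by
        rw [hOne, ← integral_add hlow hhigh, ← Set.compl_Iic]
        simp only [Set.indicator_self_add_compl_apply, id, hmean]
    _ = (∫ ω, (Ioi 0).indicator id (x + X 0 ω)) - ∫ ω, (Ioi 0).indicator (gOne X) (x + X 0 ω) := by
        rw [hgOne]; ring
    _ = ∫ ω, (Ioi 0).indicator (hOne X) (x + X 0 ω) := by
        rw [← integral_sub hhigh hg]
        exact congrArg _ (funext fun ω => (congrFun (Set.indicator_sub (Ioi 0) id (gOne X)) _).symm)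
    _ = _ := by
        congr 1
        funext ω
        by_cases h : 0 < x + X 0 ω <;> simp [h, one_lt_exitTime_iff, partialSum_one]
end

section
/- In the mixed-drift setting (X₁ centered with E[|X₁|^{2+δ}] < ∞; X₂ with E[X₂²] < ∞, m = E[X₂] > 0 and E[(X₂⁻)^{3+δ}] < ∞), the function h(x) = x₁ − E[(x₁ + S₁(τ_x)); τ_x < ∞] on the open quadrant is harmonic for the two-dimensional random walk killed upon exiting the quadrant: h(x) = E[h(x + S(1)); τ_x > 1]. -/
/-!
First-step analysis. If the first step `x + X 0` leaves the quadrant, then `τ_x = 1` and the exit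
abscissa is `x₁ + X₁(0)`. Otherwise `τ_x = 1 + τ'`, where `τ'` is the exit time of the shifted
walk `(X (n + 1))ₙ` started at `x + X 0`, and the exit abscissas coincide. The shifted sequence is
independent of `X 0` and has the law of the whole sequence, so Fubini gives
`E[(x₁ + S₁(τ_x)); τ_x < ∞, τ_x > 1] = E[x₁ + X₁(0) - h(x + X 0); τ_x > 1]`. Adding the part on
`{τ_x = 1}` and using `E[x₁ + X₁(0)] = x₁` yields `h(x) = E[h(x + X 0); τ_x > 1]`.
-/

open MeasureTheory ProbabilityTheory Filter Set
open scoped ENNReal NNReal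

noncomputable def partialSum2 {Ω : Type*} (X : ℕ → Ω → ℝ × ℝ) (n : ℕ) (ω : Ω) : ℝ × ℝ :=
  ∑ i ∈ Finset.range n, X i ω

noncomputable def exitTimeQuadrant {Ω : Type*} (X : ℕ → Ω → ℝ × ℝ) (x : ℝ × ℝ) (ω : Ω) : ℕ∞ :=
  sInf {n : ℕ∞ | ∃ m : ℕ, (m : ℕ∞) = n ∧ 1 ≤ m ∧
    ¬ (0 < x.1 + (partialSum2 X m ω).1 ∧ 0 < x.2 + (partialSum2 X m ω).2)}

/-- `h(x) = x₁ − E[(x₁ + S₁(τ_x)); τ_x < ∞]`. -/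
noncomputable def hQ {Ω : Type*} [MeasureSpace Ω] (X : ℕ → Ω → ℝ × ℝ) (x : ℝ × ℝ) : ℝ :=
  x.1 - ∫ ω, Set.indicator {ω | exitTimeQuadrant X x ω ≠ ⊤}
    (fun ω => x.1 + (partialSum2 X (exitTimeQuadrant X x ω).toNat ω).1) ω ∂ℙ

noncomputable def firstHit (P : ℕ → Prop) : ℕ∞ :=
  sInf {n : ℕ∞ | ∃ m : ℕ, (m : ℕ∞) = n ∧ P m}

section FirstHit

variable {P : ℕ → Prop}

lemma firstHit_eq_top_iff : firstHit P = ⊤ ↔ ∀ m, ¬ P m := by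
  simp only [firstHit, sInf_eq_top, mem_ofPred_eq, forall_exists_index, and_imp]
  exact ⟨fun h m hm => ENat.natCast_ne_top m (h _ m rfl hm), fun h _ m _ hm => absurd hm (h m)⟩

lemma firstHit_eq_natCast_iff {n : ℕ} : firstHit P = n ↔ P n ∧ ∀ k < n, ¬ P k := by
  constructor
  · intro h
    have hne : {n : ℕ∞ | ∃ m : ℕ, (m : ℕ∞) = n ∧ P m}.Nonempty := by
      by_contra hemp
      simp only [firstHit, not_nonempty_iff_eq_empty.1 hemp, sInf_empty] at h
      exact ENat.top_ne_natCast n h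
    obtain ⟨m, hm, hPm⟩ := csInf_mem hne
    rw [← firstHit, h] at hm
    obtain rfl : m = n := by exact_mod_cast hm
    refine ⟨hPm, fun k hk hPk => ?_⟩
    have : firstHit P ≤ k := sInf_le ⟨k, rfl, hPk⟩
    rw [h] at this
    exact absurd (Nat.cast_le.1 this) (not_le.2 hk)
  · rintro ⟨hPn, hmin⟩
    refine le_antisymm (sInf_le ⟨n, rfl, hPn⟩) (le_sInf ?_)
    rintro _ ⟨k, rfl, hPk⟩
    exact Nat.cast_le.2 (not_lt.1 fun hk => hmin k hk hPk)

lemma firstHit_eq_zero_iff : firstHit P = 0 ↔ P 0 := by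
  simpa using firstHit_eq_natCast_iff (P := P) (n := 0)

lemma firstHit_eq_add_one (h0 : ¬ P 0) : firstHit P = firstHit (fun n => P (n + 1)) + 1 := by
  cases h : firstHit (fun n => P (n + 1)) using ENat.recTopCoe with
  | top =>
    rw [top_add, firstHit_eq_top_iff]
    rintro (_ | m)
    exacts [h0, firstHit_eq_top_iff.1 h m]
  | coe n =>
    obtain ⟨hPn, hmin⟩ := firstHit_eq_natCast_iff.1 h
    rw [← Nat.cast_one, ← Nat.cast_add, firstHit_eq_natCast_iff]
    refine ⟨hPn, ?_⟩
    rintro (_ | k) hk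
    exacts [h0, hmin k (by omega)]

lemma measurable_firstHit {α : Type*} [MeasurableSpace α] {P : ℕ → α → Prop}
    (hP : ∀ n, MeasurableSet {a | P n a}) : Measurable (fun a => firstHit (P · a)) := by
  refine ENat.measurable_iff.2 fun n => ?_
  have : (fun a => firstHit (P · a)) ⁻¹' {(n : ℕ∞)} = {a | P n a} ∩ ⋂ k < n, {a | P k a}ᶜ := by
    ext a
    simp [firstHit_eq_natCast_iff]
  rw [this]
  exact (hP n).inter (.iInter fun k => .iInter fun _ => (hP k).compl)

end FirstHit

def openQuadrant : Set (ℝ × ℝ) := Ioi 0 ×ˢ Ioi 0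

lemma measurableSet_openQuadrant : MeasurableSet openQuadrant :=
  measurableSet_Ioi.prod measurableSet_Ioi

section Walk

variable {Ω : Type*} (X : ℕ → Ω → ℝ × ℝ)

@[simp] lemma partialSum2_zero (ω : Ω) : partialSum2 X 0 ω = 0 := by
  simp [partialSum2]

@[simp] lemma partialSum2_one (ω : Ω) : partialSum2 X 1 ω = X 0 ω := by
  simp [partialSum2]

lemma partialSum2_succ (n : ℕ) (ω : Ω) :
    partialSum2 X (n + 1) ω = X 0 ω + partialSum2 (fun k => X (k + 1)) n ω := by
  simp only [partialSum2, Finset.sum_range_succ', add_comm]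

lemma measurable_partialSum2 [MeasurableSpace Ω] (hX : ∀ n, Measurable (X n)) (n : ℕ) :
    Measurable (partialSum2 X n) :=
  Finset.measurable_sum _ fun i _ => hX i

lemma exitTimeQuadrant_eq_firstHit (x : ℝ × ℝ) (ω : Ω) :
    exitTimeQuadrant X x ω = firstHit (fun m => 1 ≤ m ∧ x + partialSum2 X m ω ∉ openQuadrant) :=
  rfl

lemma exitTimeQuadrant_eq_firstHit_of_mem {x : ℝ × ℝ} (hx : x ∈ openQuadrant) (ω : Ω) :
    exitTimeQuadrant X x ω = firstHit (fun m => x + partialSum2 X m ω ∉ openQuadrant) := by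
  rw [exitTimeQuadrant_eq_firstHit]
  congr with (_ | m)
  · simpa using hx
  · simp

lemma exitTimeQuadrant_eq_firstHit_add_one (x : ℝ × ℝ) (ω : Ω) :
    exitTimeQuadrant X x ω = firstHit
      (fun m => x + X 0 ω + partialSum2 (fun k => X (k + 1)) m ω ∉ openQuadrant) + 1 := by
  rw [exitTimeQuadrant_eq_firstHit, firstHit_eq_add_one (by simp)]
  simp only [partialSum2_succ, add_assoc, le_add_iff_nonneg_left, zero_le, true_and]

lemma one_le_exitTimeQuadrant (x : ℝ × ℝ) (ω : Ω) : 1 ≤ exitTimeQuadrant X x ω := by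
  rw [exitTimeQuadrant_eq_firstHit_add_one]
  exact le_add_self

lemma exitTimeQuadrant_of_notMem {x : ℝ × ℝ} {ω : Ω} (h : x + X 0 ω ∉ openQuadrant) :
    exitTimeQuadrant X x ω = 1 := by
  rw [exitTimeQuadrant_eq_firstHit_add_one, firstHit_eq_zero_iff.2 (by simpa), zero_add]

lemma exitTimeQuadrant_of_mem {x : ℝ × ℝ} {ω : Ω} (h : x + X 0 ω ∈ openQuadrant) :
    exitTimeQuadrant X x ω = exitTimeQuadrant (fun k => X (k + 1)) (x + X 0 ω) ω + 1 := by
  rw [exitTimeQuadrant_eq_firstHit_add_one, exitTimeQuadrant_eq_firstHit_of_mem _ h]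

lemma one_lt_exitTimeQuadrant_iff {x : ℝ × ℝ} {ω : Ω} :
    1 < exitTimeQuadrant X x ω ↔ x + X 0 ω ∈ openQuadrant := by
  by_cases h : x + X 0 ω ∈ openQuadrant
  · rw [exitTimeQuadrant_of_mem X h, iff_true_intro h, iff_true]
    calc (1 : ℕ∞) < 1 + 1 := by norm_num
      _ ≤ _ := add_le_add_left (one_le_exitTimeQuadrant _ _ _) 1
  · simp [h, exitTimeQuadrant_of_notMem X h]

noncomputable def exitAbscissa (x : ℝ × ℝ) : Ω → ℝ :=
  {ω | exitTimeQuadrant X x ω ≠ ⊤}.indicator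
    (fun ω => x.1 + (partialSum2 X (exitTimeQuadrant X x ω).toNat ω).1)

lemma exitAbscissa_of_eq_top {x : ℝ × ℝ} {ω : Ω} (h : exitTimeQuadrant X x ω = ⊤) :
    exitAbscissa X x ω = 0 :=
  indicator_of_notMem (by simpa using h) _

lemma exitAbscissa_of_eq_natCast {x : ℝ × ℝ} {ω : Ω} {n : ℕ} (h : exitTimeQuadrant X x ω = n) :
    exitAbscissa X x ω = x.1 + (partialSum2 X n ω).1 := by
  rw [exitAbscissa, indicator_of_mem (by simp [h]), h, ENat.toNat_natCast]

lemma exitAbscissa_of_notMem {x : ℝ × ℝ} {ω : Ω} (h : x + X 0 ω ∉ openQuadrant) :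
    exitAbscissa X x ω = x.1 + (X 0 ω).1 := by
  rw [exitAbscissa_of_eq_natCast (n := 1) X (by exact_mod_cast exitTimeQuadrant_of_notMem X h),
    partialSum2_one]

lemma exitAbscissa_of_mem {x : ℝ × ℝ} {ω : Ω} (h : x + X 0 ω ∈ openQuadrant) :
    exitAbscissa X x ω = exitAbscissa (fun k => X (k + 1)) (x + X 0 ω) ω := by
  have hτ := exitTimeQuadrant_of_mem X h
  cases hτ' : exitTimeQuadrant (fun k => X (k + 1)) (x + X 0 ω) ω using ENat.recTopCoe with
  | top => rw [exitAbscissa_of_eq_top _ hτ', exitAbscissa_of_eq_top _ (by simp [hτ, hτ'])]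
  | coe n =>
    rw [exitAbscissa_of_eq_natCast _ hτ', exitAbscissa_of_eq_natCast (n := n + 1) _ (by simp [hτ, hτ']),
      partialSum2_succ, Prod.fst_add, Prod.fst_add, add_assoc]

lemma measurable_exitAbscissa_uncurry [MeasurableSpace Ω] (hX : ∀ n, Measurable (X n)) :
    Measurable (fun p : (ℝ × ℝ) × Ω => exitAbscissa X p.1 p.2) := by
  have hS := measurable_partialSum2 X hX
  have hτ : Measurable (fun p : (ℝ × ℝ) × Ω => exitTimeQuadrant X p.1 p.2) :=
    measurable_firstHit fun m => (MeasurableSet.const _).inter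
      (measurableSet_openQuadrant.compl.preimage (measurable_fst.add ((hS m).comp measurable_snd)))
  have hval : Measurable (fun q : ((ℝ × ℝ) × Ω) × ℕ => q.1.1.1 + (partialSum2 X q.2 q.1.2).1) :=
    measurable_from_prod_countable_left fun m =>
      measurable_fst.fst.add ((hS m).comp measurable_snd).fst
  exact (hval.comp (measurable_id.prodMk (measurable_of_countable ENat.toNat |>.comp hτ))).indicator
    (hτ (measurableSet_singleton ⊤).compl)

end Walk

section Markov

variable {Ω E : Type*} [MeasurableSpace Ω] [MeasurableSpace E] {μ : Measure Ω}
  {X : ℕ → Ω → E} {g : E × (ℕ → E) → ℝ}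

lemma integral_map_seq_section (hX : ∀ n, Measurable (X n)) (hg : StronglyMeasurable g) (a : E) :
    ∫ z, g (a, z) ∂(μ.map fun ω n => X n ω) = ∫ ω, g (a, fun n => X n ω) ∂μ :=
  integral_map (measurable_pi_lambda _ hX).aemeasurable
    (hg.comp_measurable measurable_prodMk_left).aestronglyMeasurable

lemma stronglyMeasurable_integral_seq_section [IsFiniteMeasure μ] (hX : ∀ n, Measurable (X n))
    (hg : StronglyMeasurable g) :
    StronglyMeasurable (fun a => ∫ ω, g (a, fun n => X n ω) ∂μ) := by
  simpa only [integral_map_seq_section hX hg] using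
    hg.integral_prod_right' (ν := μ.map fun ω n => X n ω)

namespace ProbabilityTheory.iIndepFun

lemma indepFun_head_tail_s10 (hX : ∀ n, Measurable (X n))
    (hindep : iIndepFun X μ) : IndepFun (X 0) (fun ω n => X (n + 1) ω) μ := by
  rw [IndepFun_iff_Indep]
  have h := indep_iSup_of_disjoint (fun n => (hX n).comap_le) hindep
    (S := {0}) (T := range Nat.succ) (by simp)
  refine indep_of_indep_of_le_right (indep_of_indep_of_le_left h ?_) ?_
  · exact le_iSup₂ (f := fun n (_ : n ∈ ({0} : Set ℕ)) => MeasurableSpace.comap (X n) _) 0 rfl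
  · rw [MeasurableSpace.pi, MeasurableSpace.comap_iSup]
    refine iSup_le fun n => ?_
    rw [MeasurableSpace.comap_comp]
    exact le_iSup₂ (f := fun n (_ : n ∈ range Nat.succ) => MeasurableSpace.comap (X n) _) (n + 1)
      ⟨n, rfl⟩

lemma map_tail_eq (hX : ∀ n, Measurable (X n))
    (hindep : iIndepFun X μ) (hident : ∀ n, IdentDistrib (X n) (X 0) μ μ) :
    μ.map (fun ω n => X (n + 1) ω) = μ.map (fun ω n => X n ω) := by
  rw [(hindep.precomp Nat.succ_injective).map_fun_eq_infinitePi_map (fun n => hX _),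
    hindep.map_fun_eq_infinitePi_map hX]
  congr with n : 1
  exact (hident (n + 1)).map_eq.trans (hident n).map_eq.symm

lemma map_head_tail_eq_prod (hX : ∀ n, Measurable (X n))
    (hindep : iIndepFun X μ) (hident : ∀ n, IdentDistrib (X n) (X 0) μ μ) :
    μ.map (fun ω => (X 0 ω, fun n => X (n + 1) ω)) =
      (μ.map (X 0)).prod (μ.map (fun ω n => X n ω)) := by
  have := hindep.isProbabilityMeasure
  rw [← hindep.map_tail_eq hX hident]
  exact (indepFun_iff_map_prod_eq_prod_map_map (hX 0).aemeasurable
    (measurable_pi_lambda _ fun n => hX _).aemeasurable).1 (hindep.indepFun_head_tail_s10 hX)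

lemma integrable_prod_map_iff (hX : ∀ n, Measurable (X n)) (hindep : iIndepFun X μ)
    (hident : ∀ n, IdentDistrib (X n) (X 0) μ μ) (hg : StronglyMeasurable g) :
    Integrable g ((μ.map (X 0)).prod (μ.map fun ω n => X n ω)) ↔
      Integrable (fun ω => g (X 0 ω, fun n => X (n + 1) ω)) μ := by
  rw [← hindep.map_head_tail_eq_prod hX hident]
  exact integrable_map_measure hg.aestronglyMeasurable
    ((hX 0).prodMk (measurable_pi_lambda _ fun n => hX _)).aemeasurable

lemma integral_head_tail (hX : ∀ n, Measurable (X n)) (hindep : iIndepFun X μ)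
    (hident : ∀ n, IdentDistrib (X n) (X 0) μ μ) (hg : StronglyMeasurable g)
    (hint : Integrable (fun ω => g (X 0 ω, fun n => X (n + 1) ω)) μ) :
    ∫ ω, g (X 0 ω, fun n => X (n + 1) ω) ∂μ = ∫ ω, ∫ ω', g (X 0 ω, fun n => X n ω') ∂μ ∂μ := by
  have := hindep.isProbabilityMeasure
  have hprod := (integrable_prod_map_iff hX hindep hident hg).2 hint
  calc ∫ ω, g (X 0 ω, fun n => X (n + 1) ω) ∂μ
      = ∫ p, g p ∂((μ.map (X 0)).prod (μ.map fun ω n => X n ω)) := by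
        rw [← hindep.map_head_tail_eq_prod hX hident, integral_map
          ((hX 0).prodMk (measurable_pi_lambda _ fun n => hX _)).aemeasurable
          hg.aestronglyMeasurable]
    _ = ∫ a, ∫ z, g (a, z) ∂(μ.map fun ω n => X n ω) ∂(μ.map (X 0)) := integral_prod _ hprod
    _ = ∫ ω, ∫ ω', g (X 0 ω, fun n => X n ω') ∂μ ∂μ := by
        simp only [integral_map_seq_section hX hg]
        exact integral_map (hX 0).aemeasurable
          (stronglyMeasurable_integral_seq_section hX hg).aestronglyMeasurable

lemma integrable_integral_head_tail (hX : ∀ n, Measurable (X n)) (hindep : iIndepFun X μ)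
    (hident : ∀ n, IdentDistrib (X n) (X 0) μ μ) (hg : StronglyMeasurable g)
    (hint : Integrable (fun ω => g (X 0 ω, fun n => X (n + 1) ω)) μ) :
    Integrable (fun ω => ∫ ω', g (X 0 ω, fun n => X n ω') ∂μ) μ := by
  have := hindep.isProbabilityMeasure
  have h := ((integrable_prod_map_iff hX hindep hident hg).2 hint).integral_prod_left
  simp only [integral_map_seq_section hX hg] at h
  exact (integrable_map_measure (stronglyMeasurable_integral_seq_section hX hg).aestronglyMeasurable
    (hX 0).aemeasurable).1 h

end ProbabilityTheory.iIndepFun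

end Markov

lemma integrable_of_integrable_abs_rpow {Ω : Type*} [MeasurableSpace Ω] {μ : Measure Ω}
    [IsFiniteMeasure μ] {f : Ω → ℝ} {p : ℝ} (hp : 1 ≤ p) (hf : AEStronglyMeasurable f μ)
    (h : Integrable (fun ω => |f ω| ^ p) μ) : Integrable f μ := by
  have hLp : MemLp f (ENNReal.ofReal p) μ := by
    rw [← integrable_norm_rpow_iff hf (by simp; linarith) ENNReal.ofReal_ne_top,
      ENNReal.toReal_ofReal (by linarith)]
    simpa only [Real.norm_eq_abs] using h
  exact memLp_one_iff_integrable.1 (hLp.mono_exponent (by simpa using hp))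

section FirstStep

variable {Ω : Type*} [MeasurableSpace Ω] {μ : Measure Ω} {X : ℕ → Ω → ℝ × ℝ}

lemma exitAbscissa_first_step (hX : ∀ n, Measurable (X n)) (hindep : iIndepFun X μ)
    (hident : ∀ n, IdentDistrib (X n) (X 0) μ μ) (x : ℝ × ℝ)
    (hint : Integrable (exitAbscissa X x) μ) :
    IntegrableOn (fun ω => ∫ ω', exitAbscissa X (x + X 0 ω) ω' ∂μ)
        {ω | x + X 0 ω ∈ openQuadrant} μ ∧
      ∫ ω in {ω | x + X 0 ω ∈ openQuadrant}, exitAbscissa X x ω ∂μ =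
        ∫ ω in {ω | x + X 0 ω ∈ openQuadrant}, ∫ ω', exitAbscissa X (x + X 0 ω) ω' ∂μ ∂μ := by
  classical
  set A := {ω | x + X 0 ω ∈ openQuadrant}
  have hA : MeasurableSet A := measurableSet_openQuadrant.preimage (measurable_const.add (hX 0))
  let g : (ℝ × ℝ) × (ℕ → ℝ × ℝ) → ℝ := fun p =>
    if x + p.1 ∈ openQuadrant then exitAbscissa (fun n z => z n) (x + p.1) p.2 else 0
  have hg : StronglyMeasurable g :=
    (Measurable.ite (measurableSet_openQuadrant.preimage (measurable_const.add measurable_fst))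
      ((measurable_exitAbscissa_uncurry _ fun n => measurable_pi_apply n).comp
        ((measurable_const.add measurable_fst).prodMk measurable_snd))
      measurable_const).stronglyMeasurable
  have hg_tail : (fun ω => g (X 0 ω, fun n => X (n + 1) ω)) = A.indicator (exitAbscissa X x) := by
    ext ω
    by_cases hω : ω ∈ A
    · simp only [g, indicator_of_mem hω, if_pos (show x + X 0 ω ∈ openQuadrant from hω)]
      exact (exitAbscissa_of_mem X hω).symm
    · simp only [g, indicator_of_notMem hω, if_neg (show x + X 0 ω ∉ openQuadrant from hω)]
  have hg_seq : (fun ω => ∫ ω', g (X 0 ω, fun n => X n ω') ∂μ) =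
      A.indicator (fun ω => ∫ ω', exitAbscissa X (x + X 0 ω) ω' ∂μ) := by
    ext ω
    by_cases hω : ω ∈ A
    · simp only [g, indicator_of_mem hω, if_pos (show x + X 0 ω ∈ openQuadrant from hω)]
      rfl
    · simp only [g, indicator_of_notMem hω, if_neg (show x + X 0 ω ∉ openQuadrant from hω),
        integral_zero]
  have hint' : Integrable (fun ω => g (X 0 ω, fun n => X (n + 1) ω)) μ :=
    hg_tail ▸ hint.indicator hA
  refine ⟨?_, ?_⟩
  · rw [← integrable_indicator_iff hA, ← hg_seq]
    exact hindep.integrable_integral_head_tail hX hident hg hint'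
  · rw [← integral_indicator hA, ← integral_indicator hA, ← hg_tail, ← hg_seq]
    exact hindep.integral_head_tail hX hident hg hint'

end FirstStep

lemma hQ_eq_sub_integral_exitAbscissa {Ω : Type*} [MeasureSpace Ω] (X : ℕ → Ω → ℝ × ℝ)
    (x : ℝ × ℝ) : hQ X x = x.1 - ∫ ω, exitAbscissa X x ω :=
  rfl

theorem hQ_harmonic_general
    {Ω : Type*} [MeasureSpace Ω] [IsProbabilityMeasure (ℙ : Measure Ω)]
    (X : ℕ → Ω → ℝ × ℝ) (X0 : Ω → ℝ × ℝ) (δ : ℝ) (hδ : 0 < δ)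
    (hmeas : ∀ n, Measurable (X n))
    (hindep : iIndepFun X ℙ)
    (hident : ∀ n, IdentDistrib (X n) X0 ℙ ℙ)
    (hcent1 : ∫ ω, (X0 ω).1 ∂ℙ = 0)
    (hmom1 : Integrable (fun ω => |(X0 ω).1| ^ (2 + δ)) ℙ)
    (hfin : ∀ x : ℝ × ℝ, 0 < x.1 → 0 < x.2 →
      Integrable (Set.indicator {ω | exitTimeQuadrant X x ω ≠ ⊤}
        (fun ω => x.1 + (partialSum2 X (exitTimeQuadrant X x ω).toNat ω).1)) ℙ)
    (x : ℝ × ℝ) (hx1 : 0 < x.1) (hx2 : 0 < x.2) :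
    hQ X x = ∫ ω, Set.indicator {ω | 1 < exitTimeQuadrant X x ω}
      (fun ω => hQ X (x + partialSum2 X 1 ω)) ω ∂ℙ := by
  have hint : Integrable (exitAbscissa X x) ℙ := hfin x hx1 hx2
  obtain ⟨hFint, hFeq⟩ := exitAbscissa_first_step hmeas hindep
    (fun n => (hident n).trans (hident 0).symm) x hint
  set A := {ω | x + X 0 ω ∈ openQuadrant}
  have hA : MeasurableSet A := measurableSet_openQuadrant.preimage (measurable_const.add (hmeas 0))
  have hτA : {ω | 1 < exitTimeQuadrant X x ω} = A := by
    ext ω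
    exact one_lt_exitTimeQuadrant_iff X
  have hid1 : IdentDistrib (fun ω => (X 0 ω).1) (fun ω => (X0 ω).1) ℙ ℙ :=
    (hident 0).comp measurable_fst
  have hX01 : Integrable (fun ω => (X 0 ω).1) ℙ :=
    hid1.integrable_iff.2 <| integrable_of_integrable_abs_rpow (by linarith)
      (hident 0).aemeasurable_snd.fst.aestronglyMeasurable hmom1
  have hstep : Integrable (fun ω => x.1 + (X 0 ω).1) ℙ := (integrable_const _).add hX01
  have hmean : ∫ ω, x.1 + (X 0 ω).1 = x.1 := by
    rw [integral_add (integrable_const _) hX01, hid1.integral_eq, hcent1, integral_const,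
      probReal_univ, one_smul, add_zero]
  have hexit : ∫ ω in Aᶜ, exitAbscissa X x ω = ∫ ω in Aᶜ, x.1 + (X 0 ω).1 :=
    setIntegral_congr_fun hA.compl fun ω hω => exitAbscissa_of_notMem X hω
  have hsplit := integral_add_compl hA hint
  have hsplit' := integral_add_compl hA hstep
  rw [hτA, integral_indicator hA]
  simp only [partialSum2_one, hQ_eq_sub_integral_exitAbscissa, Prod.fst_add]
  rw [integral_sub hstep.integrableOn hFint]
  linarith

/-- in the mixed-drift setting, `h` is harmonic for the 2-dimensional walk
killed upon exiting the quadrant: `h(x) = E[h(x + S(1)); τ_x > 1]`. -/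
theorem hQ_harmonic
    {Ω : Type*} [MeasureSpace Ω] [IsProbabilityMeasure (ℙ : Measure Ω)]
    (X : ℕ → Ω → ℝ × ℝ) (X0 : Ω → ℝ × ℝ) (δ : ℝ) (hδ : 0 < δ)
    (hmeas : ∀ n, Measurable (X n))
    (hindep : iIndepFun X ℙ)
    (hident : ∀ n, IdentDistrib (X n) X0 ℙ ℙ)
    (hcent1 : ∫ ω, (X0 ω).1 ∂ℙ = 0)
    (hmom1 : Integrable (fun ω => |(X0 ω).1| ^ (2 + δ)) ℙ)
    (hsq2 : Integrable (fun ω => (X0 ω).2 ^ 2) ℙ)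
    (hdrift2 : 0 < ∫ ω, (X0 ω).2 ∂ℙ)
    (hmom2 : Integrable (fun ω => max (-(X0 ω).2) 0 ^ (3 + δ)) ℙ)
    (hfin : ∀ x : ℝ × ℝ, 0 < x.1 → 0 < x.2 →
      Integrable (Set.indicator {ω | exitTimeQuadrant X x ω ≠ ⊤}
        (fun ω => x.1 + (partialSum2 X (exitTimeQuadrant X x ω).toNat ω).1)) ℙ)
    (x : ℝ × ℝ) (hx1 : 0 < x.1) (hx2 : 0 < x.2) :
    hQ X x = ∫ ω, Set.indicator {ω | 1 < exitTimeQuadrant X x ω}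
      (fun ω => hQ X (x + partialSum2 X 1 ω)) ω ∂ℙ :=
  hQ_harmonic_general X X0 δ hδ hmeas hindep hident hcent1 hmom1 hfin x hx1 hx2
end

section
/- Let X be centered with E[X²] < ∞ and X non-degenerate. Define a, b, m as above and V(x) = x + A·m(x) + R with A = 4/E[(X⁻)²]. Then there exists R > 0 such that V is superharmonic for the random walk killed when exiting (0,∞): E[V(x + S(1)); τ_x > 1] ≤ V(x) for all x ≥ 0. -/
open MeasureTheory ProbabilityTheory Filter Set
open scoped ENNReal NNReal

noncomputable def aFun {Ω : Type*} [MeasureSpace Ω] (X : Ω → ℝ) (y : ℝ) : ℝ :=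
  ∫ u in Set.Ioi y, (ℙ {ω | X ω ≤ -u}).toReal

noncomputable def bFun {Ω : Type*} [MeasureSpace Ω] (X : Ω → ℝ) (x : ℝ) : ℝ :=
  ∫ y in Set.Ioi x, aFun X y

noncomputable def mFun {Ω : Type*} [MeasureSpace Ω] (X : Ω → ℝ) (x : ℝ) : ℝ :=
  ∫ y in (0 : ℝ)..x, bFun X y

/-!
Write `N = max (-X) 0`, `σ² = E[N²]`, `V = vFun X A R` and `K = kFun X A`. As `m' = b`, `b' = -a`
and `a` is nonincreasing, `m` is concave with `m (x - t) ≤ m x - t * b x - a x * t² / 2` for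
`t ≥ 0`. Averaging the resulting bound on `m ((x + X)⁺)` and using `E[X] = 0` and
`E[(x + X)⁺] = x + a x` gives `E[V (x + X); x + X > 0] ≤ V x + a x * K x - R * P[X ≤ -x]`.
`K` is nonincreasing on `[0, ∞)` with limit `1 - A σ² / 2 < 0`, so `K < 0` beyond some `x₁`.
On `[0, x₁]` one has `a x ≤ c * P[X ≤ -x]`, because `a` is nonincreasing if
`P[X ≤ -x₁] > 0` and because `N ≤ x₁` a.s. otherwise; hence `R = max 1 (c * K 0)` works.
-/

open scoped Topology

noncomputable def kFun {Ω : Type*} [MeasureSpace Ω] (X : Ω → ℝ) (A x : ℝ) : ℝ :=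
  1 + A * bFun X x - A / 2 * ∫ ω, min (max (-X ω) 0) x ^ 2 ∂ℙ

noncomputable def vFun {Ω : Type*} [MeasureSpace Ω] (X : Ω → ℝ) (A R x : ℝ) : ℝ :=
  x + A * mFun X x + R

lemma mFun_zero {Ω : Type*} [MeasureSpace Ω] (X : Ω → ℝ) : mFun X 0 = 0 :=
  intervalIntegral.integral_same

lemma kFun_zero {Ω : Type*} [MeasureSpace Ω] (X : Ω → ℝ) (A : ℝ) :
    kFun X A 0 = 1 + A * bFun X 0 := by
  simp [kFun]

lemma integrableOn_Ioi_max_neg_sub (x c : ℝ) :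
    IntegrableOn (fun y => max (-y - c) 0) (Ioi x) := by
  refine ((continuous_neg.sub continuous_const).max continuous_const).integrableOn_Icc
    (a := x) (b := -c) |>.of_forall_sdiff_eq_zero measurableSet_Ioi fun y hy => ?_
  have : -c < y := lt_of_not_ge fun h => hy.2 ⟨hy.1.out.le, h⟩
  exact max_eq_right (by simp only [Pi.sub_apply]; linarith)

lemma integral_Ioi_max_neg_sub (x c : ℝ) :
    ∫ y in Ioi x, max (-y - c) 0 = max (-x - c) 0 ^ 2 / 2 := by
  rcases le_or_gt (-c) x with h | h
  · rw [setIntegral_eq_zero_of_forall_eq_zero fun y hy => max_eq_right (by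
      linarith [hy.out]), max_eq_right (by linarith)]
    norm_num
  · have hzero : ∀ y ∈ Ioi x \ Ioc x (-c), max (-y - c) 0 = 0 := fun y hy => by
      have : -c < y := lt_of_not_ge fun h' => hy.2 ⟨hy.1.out, h'⟩
      exact max_eq_right (by linarith)
    have hlin : EqOn (fun y => max (-y - c) 0) (fun y => -c - y) (uIcc x (-c)) := fun y hy => by
      rw [uIcc_of_le h.le] at hy
      exact (max_eq_left (by linarith [hy.2])).trans (by ring)
    rw [setIntegral_eq_of_subset_of_forall_sdiff_eq_zero measurableSet_Ioi Ioc_subset_Ioi_self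
      hzero, ← intervalIntegral.integral_of_le h.le, intervalIntegral.integral_congr hlin,
      intervalIntegral.integral_comp_sub_left (fun y => y), max_eq_left (by linarith)]
    rw [sub_self, integral_id]
    ring

section FiniteMeasure

variable {Ω : Type*} [MeasureSpace Ω] [IsFiniteMeasure (ℙ : Measure Ω)] {X : Ω → ℝ}

lemma integrable_max_neg_sub (hX : Integrable X ℙ) (x : ℝ) :
    Integrable (fun ω => max (-x - X ω) 0) ℙ :=
  ((integrable_const (-x)).sub hX).pos_part

lemma integrable_max_neg_sub_sq (hX : MemLp X 2 ℙ) (x : ℝ) :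
    Integrable (fun ω => max (-x - X ω) 0 ^ 2) ℙ :=
  ((memLp_const (-x)).sub hX).pos_part.integrable_sq

lemma aFun_eq_integral (hX : Integrable X ℙ) (x : ℝ) :
    aFun X x = ∫ ω, max (-x - X ω) 0 ∂ℙ := by
  rw [(integrable_max_neg_sub hX x).integral_eq_integral_meas_le
    (Eventually.of_forall fun ω => le_max_right _ _)]
  have hset : ∀ t ∈ Ioi (0 : ℝ), (ℙ : Measure Ω).real {ω | t ≤ max (-x - X ω) 0}
      = (ℙ {ω | X ω ≤ -(t + x)}).toReal := fun t ht => by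
    rw [measureReal_def]
    congr 2
    ext ω
    simp only [mem_ofPred_eq, le_max_iff]
    constructor
    · rintro (h | h) <;> linarith [ht.out]
    · intro h; left; linarith
  rw [setIntegral_congr_fun measurableSet_Ioi hset, aFun,
    ← (measurePreserving_add_right volume x).setIntegral_preimage_emb
      (MeasurableEquiv.addRight x).measurableEmbedding]
  congr 1
  ext t
  simp

lemma aFun_nonneg (hX : Integrable X ℙ) (x : ℝ) : 0 ≤ aFun X x := by
  rw [aFun_eq_integral hX]
  exact integral_nonneg fun ω => le_max_right _ _

lemma aFun_antitone (hX : Integrable X ℙ) : Antitone (aFun X) := fun x y h => by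
  rw [aFun_eq_integral hX, aFun_eq_integral hX]
  exact integral_mono (integrable_max_neg_sub hX y) (integrable_max_neg_sub hX x)
    fun ω => max_le_max (by linarith) le_rfl

lemma bFun_eq_integral (hX : MemLp X 2 ℙ) (x : ℝ) :
    bFun X x = ∫ ω, max (-x - X ω) 0 ^ 2 / 2 ∂ℙ := by
  have hX1 := hX.integrable one_le_two
  have hswap : ∫⁻ y in Ioi x, ENNReal.ofReal (aFun X y)
      = ∫⁻ ω, ENNReal.ofReal (max (-x - X ω) 0 ^ 2 / 2) ∂ℙ := by
    simp_rw [aFun_eq_integral hX1, ofReal_integral_eq_lintegral_ofReal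
      (integrable_max_neg_sub hX1 _) (ae_of_all _ fun ω => le_max_right _ _)]
    rw [lintegral_lintegral_swap]
    · refine lintegral_congr fun ω => ?_
      rw [← ofReal_integral_eq_lintegral_ofReal (integrableOn_Ioi_max_neg_sub x (X ω))
        (ae_of_all _ fun y => le_max_right _ _), integral_Ioi_max_neg_sub]
    · exact ((measurable_fst.neg.aemeasurable.sub
        hX.aestronglyMeasurable.aemeasurable.comp_snd).max aemeasurable_const).ennreal_ofReal
  rw [bFun, integral_eq_lintegral_of_nonneg_ae (ae_of_all _ (aFun_nonneg hX1))
      (aFun_antitone hX1).measurable.aestronglyMeasurable, hswap,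
    ← ofReal_integral_eq_lintegral_ofReal ((integrable_max_neg_sub_sq hX x).div_const 2)
      (ae_of_all _ fun ω => by positivity),
    ENNReal.toReal_ofReal (integral_nonneg fun ω => by positivity)]

lemma bFun_nonneg (hX : MemLp X 2 ℙ) (x : ℝ) : 0 ≤ bFun X x := by
  rw [bFun_eq_integral hX]
  exact integral_nonneg fun ω => by positivity

lemma bFun_add_mul_aFun_le (hX : MemLp X 2 ℙ) {u x : ℝ} (h : u ≤ x) :
    bFun X x + (x - u) * aFun X x ≤ bFun X u := by
  have hX1 := hX.integrable one_le_two
  rw [bFun_eq_integral hX, bFun_eq_integral hX, aFun_eq_integral hX1, ← integral_const_mul,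
    ← integral_add ((integrable_max_neg_sub_sq hX x).div_const 2)
      ((integrable_max_neg_sub hX1 x).const_mul _)]
  refine integral_mono (((integrable_max_neg_sub_sq hX x).div_const 2).add
    ((integrable_max_neg_sub hX1 x).const_mul _)) ((integrable_max_neg_sub_sq hX u).div_const 2)
    fun ω => ?_
  rcases le_total (-x - X ω) 0 with hc | hc
  · simp only [max_eq_right hc]
    nlinarith [sq_nonneg (max (-u - X ω) 0)]
  · simp only [max_eq_left hc, max_eq_left (by linarith : 0 ≤ -u - X ω)]
    nlinarith

lemma bFun_antitone (hX : MemLp X 2 ℙ) : Antitone (bFun X) := fun u x h => by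
  nlinarith [bFun_add_mul_aFun_le hX h, aFun_nonneg (hX.integrable one_le_two) x]

lemma mFun_sub_mFun (hX : MemLp X 2 ℙ) (s x : ℝ) :
    mFun X x - mFun X s = ∫ y in s..x, bFun X y := by
  rw [mFun, mFun, sub_eq_iff_eq_add', intervalIntegral.integral_add_adjacent_intervals
    ((bFun_antitone hX).intervalIntegrable) ((bFun_antitone hX).intervalIntegrable)]

lemma mFun_add_le (hX : MemLp X 2 ℙ) (x : ℝ) {t : ℝ} (ht : 0 ≤ t) :
    mFun X (x + t) ≤ mFun X x + bFun X x * t := by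
  have hle : ∫ y in x..x + t, bFun X y ≤ ∫ _ in x..x + t, bFun X x :=
    intervalIntegral.integral_mono_on (by linarith) (bFun_antitone hX).intervalIntegrable
      intervalIntegrable_const fun y hy => bFun_antitone hX hy.1
  rw [intervalIntegral.integral_const, smul_eq_mul, add_sub_cancel_left] at hle
  linarith [mFun_sub_mFun hX x (x + t)]

lemma mFun_sub_le (hX : MemLp X 2 ℙ) (x : ℝ) {t : ℝ} (ht : 0 ≤ t) :
    mFun X (x - t) ≤ mFun X x - t * bFun X x - aFun X x * t ^ 2 / 2 := by
  have hcont : Continuous fun y => bFun X x + (x - y) * aFun X x := by fun_prop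
  have hle : ∫ y in x - t..x, (bFun X x + (x - y) * aFun X x) ≤ ∫ y in x - t..x, bFun X y :=
    intervalIntegral.integral_mono_on (by linarith) (hcont.intervalIntegrable _ _)
      (bFun_antitone hX).intervalIntegrable fun y hy => bFun_add_mul_aFun_le hX hy.2
  have hcalc : ∫ y in x - t..x, (bFun X x + (x - y) * aFun X x)
      = t * bFun X x + aFun X x * t ^ 2 / 2 := by
    rw [intervalIntegral.integral_comp_sub_left (fun y => bFun X x + y * aFun X x), sub_self,
      sub_sub_cancel, intervalIntegral.integral_add intervalIntegrable_const
        (intervalIntegral.intervalIntegrable_id.mul_const _),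
      intervalIntegral.integral_const, intervalIntegral.integral_mul_const, integral_id]
    simp only [smul_eq_mul]
    ring
  linarith [mFun_sub_mFun hX (x - t) x]

lemma mFun_nonneg (hX : MemLp X 2 ℙ) {z : ℝ} (hz : 0 ≤ z) : 0 ≤ mFun X z := by
  have := mFun_sub_le hX z hz
  rw [sub_self, mFun_zero] at this
  nlinarith [bFun_nonneg hX z, aFun_nonneg (hX.integrable one_le_two) z]

lemma mFun_le_mul (hX : MemLp X 2 ℙ) {z : ℝ} (hz : 0 ≤ z) : mFun X z ≤ bFun X 0 * z := by
  simpa [mFun_zero] using mFun_add_le hX 0 hz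

lemma mFun_max_add_le (hX : MemLp X 2 ℙ) {x : ℝ} (hx : 0 ≤ x) (t : ℝ) :
    mFun X (max (x + t) 0) ≤ mFun X x + bFun X x * t
      - aFun X x / 2 * min (max (-t) 0) x ^ 2 + bFun X x * max (-x - t) 0 := by
  rcases le_total 0 t with ht | ht
  · simp only [max_eq_left (by linarith : 0 ≤ x + t), max_eq_right (by linarith : -t ≤ 0),
      max_eq_right (by linarith : -x - t ≤ 0), min_eq_left hx]
    linarith [mFun_add_le hX x ht]
  rcases le_total (-x) t with hxt | hxt
  · simp only [max_eq_left (by linarith : 0 ≤ x + t), max_eq_left (by linarith : 0 ≤ -t),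
      max_eq_right (by linarith : -x - t ≤ 0), min_eq_left (by linarith : -t ≤ x)]
    have := mFun_sub_le hX x (neg_nonneg.2 ht)
    rw [sub_neg_eq_add] at this
    nlinarith
  · simp only [max_eq_right (by linarith : x + t ≤ 0), max_eq_left (by linarith : 0 ≤ -t),
      max_eq_left (by linarith : 0 ≤ -x - t), min_eq_right (by linarith : x ≤ -t), mFun_zero]
    have := mFun_sub_le hX x hx
    rw [sub_self, mFun_zero] at this
    nlinarith

lemma integrable_mFun_max_add (hX : MemLp X 2 ℙ) (x : ℝ) :
    Integrable (fun ω => mFun X (max (x + X ω) 0)) ℙ := by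
  have hX1 := hX.integrable one_le_two
  have hmono : Monotone fun z => mFun X (max z 0) := fun z w h => by
    have hsub := mFun_sub_mFun hX (max z 0) (max w 0)
    have hnonneg : 0 ≤ ∫ y in max z 0..max w 0, bFun X y :=
      intervalIntegral.integral_nonneg (max_le_max_right 0 h) fun y _ => bFun_nonneg hX y
    linarith
  refine (((integrable_const x).add hX1).pos_part.const_mul (bFun X 0)).mono'
    (hmono.measurable.comp_aemeasurable
      (aemeasurable_const.add hX1.aemeasurable)).aestronglyMeasurable
    (ae_of_all _ fun ω => ?_)
  rw [Real.norm_of_nonneg (mFun_nonneg hX (le_max_right _ _))]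
  exact mFun_le_mul hX (le_max_right _ _)

lemma integrable_min_max_neg_sq (hX : AEMeasurable X ℙ) {x : ℝ} (hx : 0 ≤ x) :
    Integrable (fun ω => min (max (-X ω) 0) x ^ 2) ℙ := by
  refine (integrable_const (x ^ 2)).mono'
    (((hX.neg.max aemeasurable_const).min aemeasurable_const).pow_const 2).aestronglyMeasurable
    (ae_of_all _ fun ω => ?_)
  have h0 : 0 ≤ min (max (-X ω) 0) x := le_min (le_max_right _ _) hx
  rw [Real.norm_of_nonneg (by positivity)]
  exact pow_le_pow_left₀ h0 (min_le_right _ _) 2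

lemma tendsto_bFun_atTop (hX : MemLp X 2 ℙ) : Tendsto (bFun X) atTop (𝓝 0) := by
  have hlim : Tendsto (fun x => ∫ ω, max (-x - X ω) 0 ^ 2 / 2 ∂ℙ) atTop
      (𝓝 (∫ _ : Ω, (0 : ℝ) ∂ℙ)) := by
    refine tendsto_integral_filter_of_dominated_convergence (fun ω => max (-X ω) 0 ^ 2 / 2)
      (Eventually.of_forall fun x => ((integrable_max_neg_sub_sq hX x).div_const 2).1)
      ((eventually_ge_atTop 0).mono fun x hx => ae_of_all _ fun ω => ?_)
      (hX.neg_part.integrable_sq.div_const 2)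
      (ae_of_all _ fun ω => tendsto_nhds_of_eventually_eq ?_)
    · rw [Real.norm_of_nonneg (by positivity)]
      gcongr
      linarith
    · filter_upwards [eventually_ge_atTop (-X ω)] with x hx
      simp [max_eq_right (by linarith : -x - X ω ≤ 0)]
  simpa [← bFun_eq_integral hX] using hlim

lemma tendsto_integral_min_max_neg_sq (hX : MemLp X 2 ℙ) :
    Tendsto (fun x => ∫ ω, min (max (-X ω) 0) x ^ 2 ∂ℙ) atTop
      (𝓝 (∫ ω, max (-X ω) 0 ^ 2 ∂ℙ)) := by
  refine tendsto_integral_filter_of_dominated_convergence (fun ω => max (-X ω) 0 ^ 2)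
    ((eventually_ge_atTop 0).mono fun x hx =>
      (integrable_min_max_neg_sq hX.aestronglyMeasurable.aemeasurable hx).1)
    ((eventually_ge_atTop 0).mono fun x hx => ae_of_all _ fun ω => ?_)
    hX.neg_part.integrable_sq (ae_of_all _ fun ω => tendsto_nhds_of_eventually_eq ?_)
  · have h0 : 0 ≤ min (max (-X ω) 0) x := le_min (le_max_right _ _) hx
    rw [Real.norm_of_nonneg (by positivity)]
    exact pow_le_pow_left₀ h0 (min_le_left _ _) 2
  · filter_upwards [eventually_ge_atTop (max (-X ω) 0)] with x hx
    rw [min_eq_left hx]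

lemma kFun_antitoneOn (hX : MemLp X 2 ℙ) {A : ℝ} (hA : 0 ≤ A) :
    AntitoneOn (kFun X A) (Ici 0) := by
  intro x hx y hy hxy
  have hmono :
      ∫ ω, min (max (-X ω) 0) x ^ 2 ∂ℙ ≤ ∫ ω, min (max (-X ω) 0) y ^ 2 ∂ℙ :=
    integral_mono (integrable_min_max_neg_sq hX.aestronglyMeasurable.aemeasurable hx)
      (integrable_min_max_neg_sq hX.aestronglyMeasurable.aemeasurable hy) fun ω => by
        have h0 : 0 ≤ min (max (-X ω) 0) x := le_min (le_max_right _ _) hx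
        exact pow_le_pow_left₀ h0 (min_le_min_left _ hxy) 2
  have hb := bFun_antitone hX hxy
  simp only [kFun]
  nlinarith

lemma tendsto_kFun_atTop (hX : MemLp X 2 ℙ) (A : ℝ) :
    Tendsto (kFun X A) atTop (𝓝 (1 - A / 2 * ∫ ω, max (-X ω) 0 ^ 2 ∂ℙ)) := by
  have h := ((tendsto_bFun_atTop hX).const_mul A).const_add 1 |>.sub
    ((tendsto_integral_min_max_neg_sq hX).const_mul (A / 2))
  rwa [mul_zero, add_zero] at h

lemma exists_aFun_le_mul_measureReal (hX : Integrable X ℙ) (x₁ : ℝ) :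
    ∃ c, ∀ x ∈ Icc 0 x₁, aFun X x ≤ c * (ℙ : Measure Ω).real {ω | X ω ≤ -x} := by
  have hanti : Antitone fun u => (ℙ {ω | X ω ≤ -u}).toReal := fun u v h =>
    ENNReal.toReal_mono (measure_ne_top _ _)
      (measure_mono fun ω hω => hω.out.trans (by linarith))
  by_cases hnull : ℙ {ω | X ω ≤ -x₁} = 0
  · refine ⟨x₁, fun x hx => ?_⟩
    have hzero : ∀ u ∈ Ioi x \ Ioc x x₁, (ℙ {ω | X ω ≤ -u}).toReal = 0 := fun u hu => by
      have : x₁ < u := lt_of_not_ge fun h => hu.2 ⟨hu.1, h⟩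
      rw [measure_mono_null (fun ω hω => hω.out.trans (by linarith)) hnull, ENNReal.toReal_zero]
    calc aFun X x = ∫ u in x..x₁, (ℙ {ω | X ω ≤ -u}).toReal := by
          rw [aFun, setIntegral_eq_of_subset_of_forall_sdiff_eq_zero measurableSet_Ioi
            Ioc_subset_Ioi_self hzero, intervalIntegral.integral_of_le hx.2]
      _ ≤ ∫ _ in x..x₁, (ℙ : Measure Ω).real {ω | X ω ≤ -x} :=
          intervalIntegral.integral_mono_on hx.2 hanti.intervalIntegrable intervalIntegrable_const
            fun u hu => hanti hu.1
      _ ≤ x₁ * (ℙ : Measure Ω).real {ω | X ω ≤ -x} := by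
          rw [intervalIntegral.integral_const, smul_eq_mul]
          exact mul_le_mul_of_nonneg_right (by linarith [hx.1]) measureReal_nonneg
  · have hpos : 0 < (ℙ : Measure Ω).real {ω | X ω ≤ -x₁} :=
      ENNReal.toReal_pos hnull (measure_ne_top _ _)
    refine ⟨aFun X 0 / (ℙ : Measure Ω).real {ω | X ω ≤ -x₁}, fun x hx => ?_⟩
    rw [div_mul_eq_mul_div, le_div_iff₀ hpos]
    exact mul_le_mul (aFun_antitone hX hx.1) (hanti hx.2) measureReal_nonneg (aFun_nonneg hX 0)

end FiniteMeasure

section ProbabilityMeasure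

variable {Ω : Type*} [MeasureSpace Ω] [IsProbabilityMeasure (ℙ : Measure Ω)] {X : Ω → ℝ}

lemma integral_max_add (hX : Integrable X ℙ) (hcent : ∫ ω, X ω ∂ℙ = 0) (x : ℝ) :
    ∫ ω, max (x + X ω) 0 ∂ℙ = x + aFun X x := by
  have hsplit : ∀ ω, max (x + X ω) 0 = x + X ω + max (-x - X ω) 0 := fun ω => by
    rcases le_total (x + X ω) 0 with h | h
    · rw [max_eq_right h, max_eq_left (by linarith)]; ring
    · rw [max_eq_left h, max_eq_right (by linarith)]; ring
  have hlin : Integrable (fun ω => x + X ω) ℙ := (integrable_const x).add hX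
  simp_rw [hsplit]
  rw [integral_add hlin (integrable_max_neg_sub hX x), integral_add (integrable_const x) hX,
    hcent, integral_const, aFun_eq_integral hX]
  simp

lemma integral_mFun_max_add_le (hX : MemLp X 2 ℙ) (hcent : ∫ ω, X ω ∂ℙ = 0) {x : ℝ}
    (hx : 0 ≤ x) :
    ∫ ω, mFun X (max (x + X ω) 0) ∂ℙ ≤ mFun X x
      - aFun X x / 2 * (∫ ω, min (max (-X ω) 0) x ^ 2 ∂ℙ) + bFun X x * aFun X x := by
  have hX1 := hX.integrable one_le_two
  have hlin : Integrable (fun ω => mFun X x + bFun X x * X ω) ℙ :=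
    (integrable_const _).add (hX1.const_mul _)
  have hmin : Integrable (fun ω => aFun X x / 2 * min (max (-X ω) 0) x ^ 2) ℙ :=
    (integrable_min_max_neg_sq hX1.aemeasurable hx).const_mul _
  have hneg : Integrable (fun ω => bFun X x * max (-x - X ω) 0) ℙ :=
    (integrable_max_neg_sub hX1 x).const_mul _
  have hsub : Integrable (fun ω => mFun X x + bFun X x * X ω
      - aFun X x / 2 * min (max (-X ω) 0) x ^ 2) ℙ := hlin.sub hmin
  calc ∫ ω, mFun X (max (x + X ω) 0) ∂ℙ
      ≤ ∫ ω, (mFun X x + bFun X x * X ω - aFun X x / 2 * min (max (-X ω) 0) x ^ 2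
          + bFun X x * max (-x - X ω) 0) ∂ℙ :=
        integral_mono (integrable_mFun_max_add hX x) (hsub.add hneg)
          fun ω => mFun_max_add_le hX hx (X ω)
    _ = _ := by
      rw [integral_add hsub hneg, integral_sub hlin hmin,
        integral_add (integrable_const _) (hX1.const_mul _), integral_const_mul,
        integral_const_mul, integral_const_mul, hcent, integral_const, ← aFun_eq_integral hX1]
      simp

lemma integral_indicator_vFun_le (hX : MemLp X 2 ℙ) (hcent : ∫ ω, X ω ∂ℙ = 0) {A : ℝ}
    (hA : 0 ≤ A) (R : ℝ) {x : ℝ} (hx : 0 ≤ x) :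
    ∫ ω, indicator {ω | 0 < x + X ω} (fun ω => vFun X A R (x + X ω)) ω ∂ℙ
      ≤ vFun X A R x + aFun X x * kFun X A x
        - R * (ℙ : Measure Ω).real {ω | X ω ≤ -x} := by
  have hX1 := hX.integrable one_le_two
  have hset : NullMeasurableSet {ω | 0 < x + X ω} ℙ :=
    nullMeasurableSet_lt aemeasurable_const (aemeasurable_const.add hX1.aemeasurable)
  have hsplit : ∀ ω, indicator {ω | 0 < x + X ω} (fun ω => vFun X A R (x + X ω)) ω
      = max (x + X ω) 0 + A * mFun X (max (x + X ω) 0)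
        + indicator {ω | 0 < x + X ω} (fun _ => R) ω := fun ω => by
    by_cases h : 0 < x + X ω
    · simp [indicator_of_mem (show ω ∈ {ω | 0 < x + X ω} from h), max_eq_left h.le, vFun]
    · simp [indicator_of_notMem (show ω ∉ {ω | 0 < x + X ω} from h),
        max_eq_right (not_lt.1 h), mFun_zero]
  have hcompl : {ω | 0 < x + X ω} = {ω | X ω ≤ -x}ᶜ := by
    ext ω
    simp only [mem_ofPred_eq, mem_compl_iff, not_le]
    constructor <;> intro h <;> linarith
  have hpos : Integrable (fun ω => max (x + X ω) 0) ℙ := ((integrable_const x).add hX1).pos_part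
  have hm : Integrable (fun ω => A * mFun X (max (x + X ω) 0)) ℙ :=
    (integrable_mFun_max_add hX x).const_mul A
  have hsum : Integrable (fun ω => max (x + X ω) 0 + A * mFun X (max (x + X ω) 0)) ℙ :=
    hpos.add hm
  have hdrift := mul_le_mul_of_nonneg_left (integral_mFun_max_add_le hX hcent hx) hA
  simp_rw [hsplit]
  rw [integral_add hsum ((integrable_const R).indicator₀ hset), integral_add hpos hm,
    integral_const_mul, integral_indicator₀ hset, setIntegral_const, hcompl,
    measureReal_compl₀ (nullMeasurableSet_le hX1.aemeasurable aemeasurable_const),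
    integral_max_add hX1 hcent, probReal_univ]
  simp only [vFun, kFun, smul_eq_mul]
  linarith

lemma integral_max_neg_sq_pos (hX : MemLp X 2 ℙ) (hcent : ∫ ω, X ω ∂ℙ = 0)
    (hnondeg : ¬ (X =ᵐ[ℙ] fun _ => (0 : ℝ))) : 0 < ∫ ω, max (-X ω) 0 ^ 2 ∂ℙ := by
  refine (integral_nonneg fun ω => sq_nonneg _).lt_of_ne fun hzero => hnondeg ?_
  have hneg : (fun ω => max (-X ω) 0 ^ 2) =ᵐ[ℙ] 0 :=
    (integral_eq_zero_iff_of_nonneg (fun ω => sq_nonneg _) hX.neg_part.integrable_sq).1 hzero.symm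
  have hnonneg : 0 ≤ᵐ[ℙ] X := hneg.mono fun ω h => by
    have : max (-X ω) 0 = 0 := pow_eq_zero_iff two_ne_zero |>.1 h
    simpa using this
  exact (integral_eq_zero_iff_of_nonneg_ae hnonneg (hX.integrable one_le_two)).1 hcent

lemma exists_aFun_mul_kFun_le (hX : MemLp X 2 ℙ) {A : ℝ}
    (hA : 2 < A * ∫ ω, max (-X ω) 0 ^ 2 ∂ℙ) :
    ∃ R, 0 < R ∧ ∀ x, 0 ≤ x →
      aFun X x * kFun X A x ≤ R * (ℙ : Measure Ω).real {ω | X ω ≤ -x} := by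
  have hX1 := hX.integrable one_le_two
  have hA0 : 0 ≤ A :=
    (pos_of_mul_pos_left (by linarith) (integral_nonneg fun _ => by positivity)).le
  obtain ⟨x₁, hK₁, hx₁⟩ := ((tendsto_kFun_atTop hX A).eventually_lt_const (u := 0)
    (by linarith) |>.and (eventually_ge_atTop 0)).exists
  obtain ⟨c, hc⟩ := exists_aFun_le_mul_measureReal hX1 x₁
  have hK₀ : 0 ≤ kFun X A 0 := by
    rw [kFun_zero]
    nlinarith [bFun_nonneg hX 0]
  refine ⟨max 1 (c * kFun X A 0), lt_max_of_lt_left one_pos, fun x hx => ?_⟩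
  rcases le_total x x₁ with hxx₁ | hx₁x
  · calc aFun X x * kFun X A x ≤ aFun X x * kFun X A 0 :=
          mul_le_mul_of_nonneg_left (kFun_antitoneOn hX hA0 self_mem_Ici hx hx) (aFun_nonneg hX1 x)
      _ ≤ c * (ℙ : Measure Ω).real {ω | X ω ≤ -x} * kFun X A 0 :=
          mul_le_mul_of_nonneg_right (hc x ⟨hx, hxx₁⟩) hK₀
      _ = c * kFun X A 0 * (ℙ : Measure Ω).real {ω | X ω ≤ -x} := by ring
      _ ≤ _ := mul_le_mul_of_nonneg_right (le_max_right _ _) measureReal_nonneg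
  · have hK : kFun X A x < 0 := (kFun_antitoneOn hX hA0 hx₁ hx hx₁x).trans_lt hK₁
    exact (mul_nonpos_of_nonneg_of_nonpos (aFun_nonneg hX1 x) hK.le).trans
      (mul_nonneg (lt_max_of_lt_left one_pos).le measureReal_nonneg)

theorem exists_vFun_superharmonic (hX : MemLp X 2 ℙ) (hcent : ∫ ω, X ω ∂ℙ = 0) {A : ℝ}
    (hA : 2 < A * ∫ ω, max (-X ω) 0 ^ 2 ∂ℙ) :
    ∃ R, 0 < R ∧ ∀ x, 0 ≤ x →
      ∫ ω, indicator {ω | 0 < x + X ω} (fun ω => vFun X A R (x + X ω)) ω ∂ℙ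
        ≤ vFun X A R x := by
  have hA0 : 0 ≤ A :=
    (pos_of_mul_pos_left (by linarith) (integral_nonneg fun _ => by positivity)).le
  obtain ⟨R, hR, hbound⟩ := exists_aFun_mul_kFun_le hX hA
  exact ⟨R, hR, fun x hx => (integral_indicator_vFun_le hX hcent hA0 R hx).trans
    (by linarith [hbound x hx])⟩

end ProbabilityMeasure

/-- with `A = 4/E[(X⁻)²]`, there is `R > 0` such that
`V(x) = x + A·m(x) + R` is superharmonic for the walk killed when exiting `(0,∞)`:
`E[V(x + S(1)); τ_x > 1] ≤ V(x)` for all `x ≥ 0` (note `τ_x > 1 ⇔ x + X > 0`). -/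
theorem exists_R_superharmonic
    {Ω : Type*} [MeasureSpace Ω] [IsProbabilityMeasure (ℙ : Measure Ω)]
    (X : Ω → ℝ) (hmeas : Measurable X)
    (hsq : Integrable (fun ω => X ω ^ 2) ℙ)
    (hcent : ∫ ω, X ω ∂ℙ = 0)
    (hnondeg : ¬ (X =ᵐ[ℙ] fun _ => (0 : ℝ))) :
    ∃ R : ℝ, 0 < R ∧ ∀ x : ℝ, 0 ≤ x →
      (∫ ω, Set.indicator {ω | 0 < x + X ω}
          (fun ω => (x + X ω) + (4 / ∫ ω', max (-X ω') 0 ^ 2 ∂ℙ) * mFun X (x + X ω) + R)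
          ω ∂ℙ) ≤
        x + (4 / ∫ ω', max (-X ω') 0 ^ 2 ∂ℙ) * mFun X x + R := by
  have hX : MemLp X 2 ℙ := (memLp_two_iff_integrable_sq hmeas.aestronglyMeasurable).2 hsq
  have hσ := integral_max_neg_sq_pos hX hcent hnondeg
  exact exists_vFun_superharmonic hX hcent (by rw [div_mul_cancel₀ _ hσ.ne']; norm_num)
end
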